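/- arXiv:2105.12009 — 6 statements merged into one kernel-verified Lean document; each statement's English description precedes it below -/
import Mathlib

section
/- For every finite simple undirected graph G = (V, E) with n vertices, there exists a deterministic Rabin automaton with exactly n states over the input alphabet V recognising the language L_G. -/
/-- The set of letters occurring infinitely often in the infinite word `w`. -/
def InfOcc {α : Type} (w : ℕ → α) : Set α :=
  {a | ∀ n, ∃ m, n ≤ m ∧ w m = a}

/-- A deterministic transition-based automaton over input alphabet `σ`
with output alphabet `Γ` and set of states `Q`. -/
structure DetAut (σ Γ Q : Type) where
  init : Q
  δ : Q → σ → Q × Γ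

namespace DetAut

variable {σ Γ Q : Type}

/-- The sequence of states of the run of `A` over `w`. -/
def run (A : DetAut σ Γ Q) (w : ℕ → σ) : ℕ → Q
  | 0 => A.init
  | n + 1 => (A.δ (run A w n) (w n)).1

/-- The output word produced by `A` reading `w`. -/
def output (A : DetAut σ Γ Q) (w : ℕ → σ) (n : ℕ) : Γ :=
  (A.δ (A.run w n) (w n)).2

end DetAut

/-- `u` satisfies the Rabin condition given by the pairs in `R`. -/
def RabinAccept {Γ : Type} (R : List (Set Γ × Set Γ)) (u : ℕ → Γ) : Prop :=
  ∃ p ∈ R, (InfOcc u ∩ p.1).Nonempty ∧ InfOcc u ∩ p.2 = ∅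

/-- `u` satisfies the Streett condition given by the pairs in `R`. -/
def StreettAccept {Γ : Type} (R : List (Set Γ × Set Γ)) (u : ℕ → Γ) : Prop :=
  ∀ p ∈ R, (InfOcc u ∩ p.1).Nonempty → (InfOcc u ∩ p.2).Nonempty

/-- The language accepted by the automaton `A` with Rabin condition `R`. -/
def RabinLang {σ Γ Q : Type} (A : DetAut σ Γ Q) (R : List (Set Γ × Set Γ)) :
    Set (ℕ → σ) :=
  {w | RabinAccept R (A.output w)}

/-- The Muller language associated to the Muller condition `F`. -/
def LF {Γ : Type} (F : Set (Set Γ)) : Set (ℕ → Γ) :=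
  {w | InfOcc w ∈ F}

/-- The language `L_G = ⋃_{(v,u) ∈ E} V^* (v⁺u⁺)^ω` of infinite words over the
vertices of `G` that eventually alternate between exactly two vertices joined
by an edge of `G`: there are adjacent `v, u`, a position `N` after which only
`v` and `u` occur, and both `v` and `u` occur infinitely often. -/
def LG {V : Type} (G : SimpleGraph V) : Set (ℕ → V) :=
  {w | ∃ v u, G.Adj v u ∧
    ∃ N, (∀ n, N ≤ n → w n = v ∨ w n = u) ∧
      (∀ n, ∃ m, n ≤ m ∧ w m = v) ∧ (∀ n, ∃ m, n ≤ m ∧ w m = u)}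

/-- For every finite simple undirected graph `G` with `n` vertices there is a
deterministic Rabin automaton with exactly `n` states recognising `L_G`. -/
theorem stmt2 {V : Type} [Fintype V] [Nonempty V] (G : SimpleGraph V) :
    ∃ (Q : Type) (_ : Fintype Q), Fintype.card Q = Fintype.card V ∧
      ∃ (Γ : Type) (A : DetAut V Γ Q) (R : List (Set Γ × Set Γ)),
        RabinLang A R = LG G := by
  classical
  let A : DetAut V (V × V) V := ⟨Classical.arbitrary V, fun q a => (a, (q, a))⟩
  let S : V → V → Set (V × V) := fun v u =>
    {q | (q.1 = v ∨ q.1 = u) ∧ (q.2 = v ∨ q.2 = u)}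
  let R : List (Set (V × V) × Set (V × V)) :=
    (Finset.univ : Finset (V × V)).toList.map
      (fun p => ({q : V × V | q = p ∧ G.Adj p.1 p.2}, (S p.1 p.2)ᶜ))
  refine ⟨V, inferInstance, rfl, V × V, A, R, ?_⟩
  have hout : ∀ w n, A.output w n = (A.run w n, w n) := fun w n => rfl
  have hrun : ∀ w n, A.run w (n + 1) = w n := fun w n => rfl
  have hout' : ∀ w n, A.output w (n + 1) = (w n, w (n + 1)) := by
    intro w n; rw [hout, hrun]
  have key : ∀ (w : ℕ → V) (T : Set (V × V)), InfOcc (A.output w) ∩ Tᶜ = ∅ →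
      ∃ N, ∀ n, N ≤ n → A.output w n ∈ T := by
    intro w T hT
    by_contra h
    push_neg at h
    have hinf : {n | A.output w n ∉ T}.Infinite := by
      apply Set.infinite_of_not_bddAbove
      rintro ⟨B, hB⟩
      obtain ⟨n, hBn, hn⟩ := h (B + 1)
      exact absurd (hB hn) (by omega)
    have hsub : {n | A.output w n ∉ T} ⊆ ⋃ q ∈ Tᶜ, {n | A.output w n = q} := by
      intro n hn
      exact Set.mem_biUnion hn rfl
    by_cases hfin : ∀ q ∈ Tᶜ, {n | A.output w n = q}.Finite
    · exact hinf (Set.Finite.subset (Set.Finite.biUnion (Set.toFinite _) hfin) hsub)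
    · push_neg at hfin
      obtain ⟨q, hqT, hq⟩ := hfin
      have hqI : q ∈ InfOcc (A.output w) := by
        intro n
        obtain ⟨m, hm, hmn⟩ := Set.Infinite.exists_gt hq n
        exact ⟨m, le_of_lt hmn, hm⟩
      exact absurd hT (Set.nonempty_iff_ne_empty.mp ⟨q, hqI, hqT⟩)
  ext w
  simp only [RabinLang, Set.mem_setOf_eq, RabinAccept, LG]
  constructor
  · rintro ⟨p, hpR, ⟨q, hqInf, hqE⟩, hF⟩
    obtain ⟨vu, -, rfl⟩ := List.mem_map.mp hpR
    obtain ⟨rfl, hadj⟩ : q = vu ∧ G.Adj vu.1 vu.2 := hqE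
    obtain ⟨N, hN⟩ := key w (S q.1 q.2) hF
    refine ⟨q.1, q.2, hadj, N, ?_, ?_, ?_⟩
    · intro n hn
      have := hN n hn
      rw [hout] at this
      exact this.2
    · intro n
      obtain ⟨m, hm, hmq⟩ := hqInf (n + 1)
      obtain ⟨m', rfl⟩ : ∃ m', m = m' + 1 := ⟨m - 1, by omega⟩
      rw [hout'] at hmq
      exact ⟨m', by omega, congrArg Prod.fst hmq⟩
    · intro n
      obtain ⟨m, hm, hmq⟩ := hqInf (n + 1)
      obtain ⟨m', rfl⟩ : ∃ m', m = m' + 1 := ⟨m - 1, by omega⟩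
      rw [hout'] at hmq
      exact ⟨m' + 1, by omega, congrArg Prod.snd hmq⟩
  · rintro ⟨v, u, hadj, N, hvu, hv, hu⟩
    refine ⟨_, List.mem_map.mpr ⟨(v, u), Finset.mem_toList.mpr (Finset.mem_univ _), rfl⟩,
      ⟨(v, u), ?_, ⟨rfl, hadj⟩⟩, ?_⟩
    · -- (v,u) ∈ InfOcc (output)
      intro n
      obtain ⟨k, hk, hkv⟩ := hv (max n N)
      have hkn : n ≤ k := le_trans (le_max_left _ _) hk
      have hkN : N ≤ k := le_trans (le_max_right _ _) hk
      have hex : ∃ m, k + 1 ≤ m ∧ w m = u := hu (k + 1)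
      obtain ⟨hm1, hm2⟩ := Nat.find_spec hex
      have hwm : w (Nat.find hex - 1) = v := by
        rcases hvu (Nat.find hex - 1) (by omega) with h | h
        · exact h
        · exfalso
          rcases Nat.lt_or_ge (Nat.find hex - 1) (k + 1) with hc | hc
          · have hek : Nat.find hex - 1 = k := by omega
            rw [hek, hkv] at h
            exact hadj.ne h
          · exact Nat.find_min hex (by omega) ⟨hc, h⟩
      refine ⟨Nat.find hex, by omega, ?_⟩
      have e : Nat.find hex - 1 + 1 = Nat.find hex := by omega
      rw [← e, hout', e, hwm, hm2]
    · -- InfOcc ∩ (S v u)ᶜ = ∅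
      rw [Set.eq_empty_iff_forall_notMem]
      rintro q ⟨hqI, hqS⟩
      obtain ⟨m, hm, hmq⟩ := hqI (N + 1)
      obtain ⟨m', rfl⟩ : ∃ m', m = m' + 1 := ⟨m - 1, by omega⟩
      rw [hout'] at hmq
      exact hqS ⟨by rw [← hmq]; exact hvu m' (by omega),
        by rw [← hmq]; exact hvu (m' + 1) (by omega)⟩
end

section
/- If a finite simple undirected graph G = (V, E) admits a proper colouring with k colours, then there exists a deterministic Rabin automaton with k states recognising L_G. -/
/-- If every element of `F` occurs only finitely often in `w` (over a finite
alphabet), then eventually `w` avoids `F` altogether. -/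
lemma eventually_not_infOcc {α : Type} [Fintype α] (w : ℕ → α) (F : Set α)
    (h : InfOcc w ∩ F = ∅) : ∃ N, ∀ m, N ≤ m → w m ∉ F := by
  classical
  have key : ∀ a : α, ∃ n, a ∈ F → ∀ m, n ≤ m → w m ≠ a := by
    intro a
    by_cases ha : a ∈ F
    · have hnin : a ∉ InfOcc w := fun hin =>
        Set.eq_empty_iff_forall_notMem.mp h a ⟨hin, ha⟩
      simp only [InfOcc, Set.mem_setOf_eq, not_forall] at hnin
      obtain ⟨n, hn⟩ := hnin
      push_neg at hn
      exact ⟨n, fun _ m hm => hn m hm⟩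
    · exact ⟨0, fun hf => absurd hf ha⟩
  choose f hf using key
  refine ⟨Finset.univ.sup f, fun m hm hmem => ?_⟩
  exact hf (w m) hmem m (le_trans (Finset.le_sup (Finset.mem_univ _)) hm) rfl

/-- If `G` admits a proper colouring with `k` colours, then there is a
deterministic Rabin automaton with `k` states recognising `L_G`. -/
theorem stmt3 {V : Type} [Fintype V] [Nonempty V] (G : SimpleGraph V)
    (k : ℕ) (c : V → Fin k) (hc : ∀ v u, G.Adj v u → c v ≠ c u) :
    ∃ (Q : Type) (_ : Fintype Q), Fintype.card Q = k ∧
      ∃ (Γ : Type) (A : DetAut V Γ Q) (R : List (Set Γ × Set Γ)),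
        RabinLang A R = LG G := by
  classical
  set A : DetAut V (Fin k × V) (Fin k) :=
    ⟨c (Classical.arbitrary V), fun q v => (c v, (q, v))⟩ with hA
  set R : List (Set (Fin k × V) × Set (Fin k × V)) :=
    (Finset.univ : Finset (V × V)).toList.map fun p =>
      ({γ | G.Adj p.1 p.2 ∧ γ = (c p.1, p.2)},
       {γ : Fin k × V | γ.2 ≠ p.1 ∧ γ.2 ≠ p.2}) with hR
  refine ⟨Fin k, inferInstance, Fintype.card_fin k, Fin k × V, A, R, ?_⟩
  have hout2 : ∀ (w : ℕ → V) (n : ℕ), (A.output w n).2 = w n := fun w n => rfl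
  have hout1 : ∀ (w : ℕ → V) (n : ℕ), (A.output w (n + 1)).1 = c (w n) :=
    fun w n => rfl
  have houtp : ∀ (w : ℕ → V) (n : ℕ),
      A.output w (n + 1) = (c (w n), w (n + 1)) := fun w n => rfl
  ext w
  constructor
  · rintro ⟨p, hpR, hne, hF⟩
    simp only [hR, List.mem_map] at hpR
    obtain ⟨q, -, rfl⟩ := hpR
    obtain ⟨v, u⟩ := q
    simp only [Set.mem_setOf_eq] at hne hF
    obtain ⟨γ, hγInf, hAdj, hγeq⟩ := hne
    subst hγeq
    -- eventually only `v` and `u` occur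
    obtain ⟨N, hN⟩ := eventually_not_infOcc (A.output w) _ hF
    have hNw : ∀ n, N ≤ n → w n = v ∨ w n = u := by
      intro n hn
      have := hN n hn
      simp only [Set.mem_setOf_eq, not_and_or, not_not, hout2] at this
      tauto
    refine ⟨v, u, hAdj, N, hNw, ?_, ?_⟩
    · -- v infinitely often
      intro n
      obtain ⟨m, hm, hmeq⟩ := hγInf (max n N + 1)
      obtain ⟨m', rfl⟩ : ∃ m', m = m' + 1 :=
        ⟨m - 1, by omega⟩
      have h1 : c (w m') = c v := by
        have := congrArg Prod.fst hmeq
        rw [hout1] at this; exact this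
      have hm' : w m' = v ∨ w m' = u := hNw m' (by omega)
      have hwv : w m' = v := by
        rcases hm' with h | h
        · exact h
        · exact absurd (h ▸ h1) (hc v u hAdj).symm
      exact ⟨m', by omega, hwv⟩
    · -- u infinitely often
      intro n
      obtain ⟨m, hm, hmeq⟩ := hγInf n
      have : w m = u := by
        have := congrArg Prod.snd hmeq
        rw [hout2] at this; exact this
      exact ⟨m, hm, this⟩
  · rintro ⟨v, u, hAdj, N, hN, hv, hu⟩
    refine ⟨({γ | G.Adj v u ∧ γ = (c v, u)},
      {γ : Fin k × V | γ.2 ≠ v ∧ γ.2 ≠ u}), ?_, ?_, ?_⟩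
    · simp only [hR, List.mem_map]
      exact ⟨(v, u), Finset.mem_toList.mpr (Finset.mem_univ _), rfl⟩
    · -- (c v, u) occurs infinitely often in the output
      refine ⟨(c v, u), ?_, hAdj, rfl⟩
      intro n
      obtain ⟨m, hm, hwm⟩ := hv (max n (N + 1))
      obtain ⟨m2, hm2, hwm2⟩ := hu (m + 1)
      have hex : ∃ j, m < j ∧ w j = u := ⟨m2, by omega, hwm2⟩
      obtain ⟨hjm, hju⟩ := Nat.find_spec hex
      have hmin : ∀ i, i < Nat.find hex → ¬(m < i ∧ w i = u) :=
        fun i hi => Nat.find_min hex hi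
      obtain ⟨j', hj⟩ : ∃ j', Nat.find hex = j' + 1 := ⟨Nat.find hex - 1, by omega⟩
      rw [hj] at hjm hju hmin
      have hwj' : w j' = v := by
        rcases Nat.lt_or_ge m j' with h | h
        · have hne : w j' ≠ u := fun heq => hmin j' (by omega) ⟨h, heq⟩
          rcases hN j' (by omega) with h2 | h2
          · exact h2
          · exact absurd h2 hne
        · have : j' = m := by omega
          rw [this, hwm]
      refine ⟨j' + 1, by omega, ?_⟩
      rw [houtp, hwj', hju]
    · -- nothing outside {v, u} occurs infinitely often
      apply Set.eq_empty_iff_forall_notMem.mpr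
      rintro γ ⟨hγInf, hγv, hγu⟩
      obtain ⟨m, hm, hmeq⟩ := hγInf N
      have : w m = γ.2 := by rw [← hout2 w m, hmeq]
      rcases hN m hm with h | h <;> simp_all
end

section
/- Let G = (V, E) be a finite simple undirected graph. Every deterministic Rabin automaton recognising L_G has at least χ(G) states, where χ(G) is the chromatic number of G. -/
-- auxiliary lemmas to insert
section Aux

/-- InfOcc of an eventually periodic word is the image of one period. -/
lemma infOcc_eq_of_periodic {α : Type} (u : ℕ → α) (N T : ℕ) (hT : 0 < T)
    (hp : ∀ n, N ≤ n → u (n + T) = u n) :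
    InfOcc u = u '' Set.Ico N (N + T) := by
  have hps : ∀ n, N ≤ n → ∀ s, u (n + T * s) = u n := by
    intro n hn s
    induction s with
    | zero => simp
    | succ s ih =>
      have e : n + T * (s + 1) = (n + T * s) + T := by ring
      rw [e, hp _ (by omega), ih]
  ext a
  constructor
  · intro ha
    obtain ⟨m, hm, hma⟩ := ha N
    refine ⟨N + (m - N) % T, ⟨by omega, by have := Nat.mod_lt (m - N) hT; omega⟩, ?_⟩
    have e : m = (N + (m - N) % T) + T * ((m - N) / T) := by
      have := Nat.mod_add_div (m - N) T
      omega
    rw [e] at hma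
    rw [← hma]
    exact (hps _ (by omega) _).symm
  · rintro ⟨j, ⟨hj1, hj2⟩, rfl⟩
    intro n
    refine ⟨j + T * n, ?_, hps j hj1 n⟩
    have : n ≤ T * n := Nat.le_mul_of_pos_left n hT
    omega

lemma iterate_idem_aux {Q : Type} (f : Q → Q) (x : Q) (i j : ℕ) (hij : i < j)
    (he : f^[i] x = f^[j] x) :
    ∀ m, i ≤ m → ∀ s, f^[m + (j - i) * s] x = f^[m] x := by
  have hstep : ∀ m, i ≤ m → f^[m + (j - i)] x = f^[m] x := by
    intro m hm
    have e1 : m + (j - i) = (m - i) + j := by omega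
    have e2 : m = (m - i) + i := by omega
    rw [e1, Function.iterate_add_apply, ← he, ← Function.iterate_add_apply, ← e2]
  intro m hm s
  induction s with
  | zero => simp
  | succ s ih =>
    have e : m + (j - i) * (s + 1) = (m + (j - i) * s) + (j - i) := by ring
    rw [e, hstep _ (by omega), ih]

/-- Iterating a self-map of a finite type `(card Q)!` times is idempotent. -/
lemma iterate_factorial_idem {Q : Type} [Fintype Q] (f : Q → Q) (x : Q) :
    f^[Nat.factorial (Fintype.card Q)] (f^[Nat.factorial (Fintype.card Q)] x) = f^[Nat.factorial (Fintype.card Q)] x := by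
  set n := Fintype.card Q with hn
  rw [← Function.iterate_add_apply]
  have key : ∀ i j : ℕ, i < j → j ≤ n → f^[i] x = f^[j] x → f^[n.factorial + n.factorial] x = f^[n.factorial] x := by
    intro i j hij hjn he
    have hl : (j - i) ∣ n.factorial := Nat.dvd_factorial (by omega) (by omega)
    have hi : i ≤ n.factorial := le_trans (by omega) (Nat.self_le_factorial n)
    have h1 : n.factorial + n.factorial = n.factorial + (j - i) * (n.factorial / (j - i)) := by
      rw [Nat.mul_div_cancel' hl]
    rw [h1]
    exact iterate_idem_aux f x i j hij he n.factorial hi _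
  obtain ⟨a, b, hab, he⟩ := Fintype.exists_ne_map_eq_of_card_lt
    (fun i : Fin (n + 1) => f^[i.1] x) (by simp [← hn])
  rcases Nat.lt_trichotomy a.1 b.1 with hlt | heq | hgt
  · exact key a.1 b.1 hlt (by omega) he
  · exact absurd (Fin.ext heq) hab
  · exact key b.1 a.1 hgt (by omega) he.symm

namespace DetAut

variable {σ Γ Q : Type}

lemma run_succ (A : DetAut σ Γ Q) (w : ℕ → σ) (n : ℕ) :
    A.run w (n + 1) = (A.δ (A.run w n) (w n)).1 := rfl

lemma run_shift (A : DetAut σ Γ Q) (w : ℕ → σ) (N1 N2 : ℕ)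
    (hr : A.run w N1 = A.run w N2) (hw : ∀ m, w (N1 + m) = w (N2 + m)) :
    ∀ m, A.run w (N1 + m) = A.run w (N2 + m) := by
  intro m
  induction m with
  | zero => simpa using hr
  | succ m ih =>
    have e1 : N1 + (m + 1) = (N1 + m) + 1 := by omega
    have e2 : N2 + (m + 1) = (N2 + m) + 1 := by omega
    rw [e1, e2, run_succ, run_succ, ih, hw m]

lemma run_block (A : DetAut σ Γ Q) (w : ℕ → σ) (a : σ) (g : Q → Q)
    (hg : ∀ q, g q = (A.δ q a).1) (m : ℕ) :
    ∀ j, (∀ i, m ≤ i → i < m + j → w i = a) →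
      A.run w (m + j) = g^[j] (A.run w m) := by
  intro j
  induction j with
  | zero => simp
  | succ j ih =>
    intro hw
    have e : m + (j + 1) = (m + j) + 1 := by omega
    rw [e, run_succ, ih (fun i h1 h2 => hw i h1 (by omega)),
      hw (m + j) (by omega) (by omega), Function.iterate_succ_apply', hg]

end DetAut

end Aux

/-- Every deterministic Rabin automaton recognising `L_G` has at least `χ(G)`
states. -/
theorem stmt4 {V : Type} [Fintype V] [Nonempty V] (G : SimpleGraph V)
    {Q Γ : Type} [Fintype Q] (A : DetAut V Γ Q) (R : List (Set Γ × Set Γ))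
    (h : RabinLang A R = LG G) :
    G.chromaticNumber ≤ (Fintype.card Q : ℕ∞) := by
  classical
  set k := Nat.factorial (Fintype.card Q) with hkdef
  have hk : 0 < k := Nat.factorial_pos _
  set f : V → Q → Q := fun a q => (A.δ q a).1 with hfdef
  have key : ∀ v u : V, G.Adj v u → (f v)^[k] A.init = (f u)^[k] A.init → False := by
    intro v u hadj heq
    set q := (f v)^[k] A.init with hqdef
    have hqv : (f v)^[k] q = q := iterate_factorial_idem _ _
    have hqu0 : (f u)^[k] A.init = q := heq.symm
    have hqu : (f u)^[k] q = q := by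
      rw [heq]; exact iterate_factorial_idem _ _
    set w : ℕ → V := fun m => if (m / k) % 2 = 0 then v else u with hwdef
    set wv : ℕ → V := fun _ => v with hwvdef
    set wu : ℕ → V := fun _ => u with hwudef
    have hwchar : ∀ t j, j < k → w (k * t + j) = if t % 2 = 0 then v else u := by
      intro t j hj
      have e : (k * t + j) / k = t := by
        rw [Nat.mul_add_div hk, Nat.div_eq_of_lt hj]
        omega
      simp only [hwdef, e]
    have hletter : ∀ t i, k * t ≤ i → i < k * t + k → w i = if t % 2 = 0 then v else u := by
      intro t i h1 h2
      have e : i = k * t + (i - k * t) := by omega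
      rw [e, hwchar t _ (by omega)]
    -- run values at block boundaries
    have hrk : A.run w k = q := by
      have hb := A.run_block w v (f v) (fun _ => rfl) 0 k (fun i h1 h2 => by
        have := hletter 0 i (by omega) (by omega); simpa using this)
      simpa [DetAut.run, hqdef] using hb
    have hr2k : A.run w (2 * k) = q := by
      have hb := A.run_block w u (f u) (fun _ => rfl) k k (fun i h1 h2 => by
        have := hletter 1 i (by omega) (by omega); simpa using this)
      rw [show 2 * k = k + k by ring, hb, hrk, hqu]
    have hr3k : A.run w (3 * k) = q := by
      have hb := A.run_block w v (f v) (fun _ => rfl) (2 * k) k (fun i h1 h2 => by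
        have := hletter 2 i (by omega) (by omega); simpa using this)
      rw [show 3 * k = 2 * k + k by ring, hb, hr2k, hqv]
    have hr4k : A.run w (4 * k) = q := by
      have hb := A.run_block w u (f u) (fun _ => rfl) (3 * k) k (fun i h1 h2 => by
        have := hletter 3 i (by omega) (by omega); simpa using this)
      rw [show 4 * k = 3 * k + k by ring, hb, hr3k, hqu]
    have hwshift : ∀ m, w (2 * k + m) = w (4 * k + m) := by
      intro m
      have e1 : (2 * k + m) / k = 2 + m / k := by
        rw [show 2 * k + m = k * 2 + m by ring, Nat.mul_add_div hk]
      have e2 : (4 * k + m) / k = 4 + m / k := by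
        rw [show 4 * k + m = k * 4 + m by ring, Nat.mul_add_div hk]
      have e3 : (2 + m / k) % 2 = (4 + m / k) % 2 := by omega
      simp only [hwdef, e1, e2, e3]
    have hshift : ∀ m, A.run w (2 * k + m) = A.run w (4 * k + m) :=
      A.run_shift w (2 * k) (4 * k) (by rw [hr2k, hr4k]) hwshift
    have houtper : ∀ n, 2 * k ≤ n → A.output w (n + 2 * k) = A.output w n := by
      intro n hn
      have e : n = 2 * k + (n - 2 * k) := by omega
      have e' : n + 2 * k = 4 * k + (n - 2 * k) := by omega
      simp only [DetAut.output]
      rw [e', ← hshift (n - 2 * k), ← hwshift (n - 2 * k), ← e]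
    have hIw : InfOcc (A.output w) = A.output w '' Set.Ico (2 * k) (2 * k + 2 * k) :=
      infOcc_eq_of_periodic _ (2 * k) (2 * k) (by omega) houtper
    -- constant words
    have hrunv : ∀ n, A.run wv n = (f v)^[n] A.init := by
      intro n
      have hb := A.run_block wv v (f v) (fun _ => rfl) 0 n (fun i _ _ => rfl)
      simpa [DetAut.run] using hb
    have hrunu : ∀ n, A.run wu n = (f u)^[n] A.init := by
      intro n
      have hb := A.run_block wu u (f u) (fun _ => rfl) 0 n (fun i _ _ => rfl)
      simpa [DetAut.run] using hb
    have houtvper : ∀ n, k ≤ n → A.output wv (n + k) = A.output wv n := by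
      intro n hn
      have ha : (f v)^[n + k] A.init = (f v)^[n - k] q := by
        rw [show n + k = (n - k) + (k + k) by omega, Function.iterate_add_apply,
          Function.iterate_add_apply, ← hqdef, hqv]
      have hb : (f v)^[n] A.init = (f v)^[n - k] q := by
        conv_lhs => rw [show n = (n - k) + k by omega]
        rw [Function.iterate_add_apply, ← hqdef]
      simp only [DetAut.output]
      rw [hrunv, hrunv, ha, hb]
    have houtuper : ∀ n, k ≤ n → A.output wu (n + k) = A.output wu n := by
      intro n hn
      have ha : (f u)^[n + k] A.init = (f u)^[n - k] q := by
        rw [show n + k = (n - k) + (k + k) by omega, Function.iterate_add_apply,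
          Function.iterate_add_apply, hqu0, hqu]
      have hb : (f u)^[n] A.init = (f u)^[n - k] q := by
        conv_lhs => rw [show n = (n - k) + k by omega]
        rw [Function.iterate_add_apply, hqu0]
      simp only [DetAut.output]
      rw [hrunu, hrunu, ha, hb]
    have hIv : InfOcc (A.output wv) = A.output wv '' Set.Ico k (k + k) :=
      infOcc_eq_of_periodic _ k k hk houtvper
    have hIu : InfOcc (A.output wu) = A.output wu '' Set.Ico k (k + k) :=
      infOcc_eq_of_periodic _ k k hk houtuper
    -- pointwise correspondence of outputs
    have hcv : ∀ j, j < k → A.output w (2 * k + j) = A.output wv (k + j) := by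
      intro j hj
      have hrwj : A.run w (2 * k + j) = (f v)^[j] q := by
        have hb := A.run_block w v (f v) (fun _ => rfl) (2 * k) j (fun i h1 h2 => by
          have := hletter 2 i (by omega) (by omega); simpa using this)
        rw [hb, hr2k]
      have hrvj : A.run wv (k + j) = (f v)^[j] q := by
        rw [hrunv, show k + j = j + k by omega, Function.iterate_add_apply, ← hqdef]
      have hwv' : w (2 * k + j) = v := by
        have := hletter 2 (2 * k + j) (by omega) (by omega); simpa using this
      simp only [DetAut.output]
      rw [hrwj, hrvj, hwv']
    have hcu : ∀ j, j < k → A.output w (2 * k + k + j) = A.output wu (k + j) := by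
      intro j hj
      have hrwj : A.run w (2 * k + k + j) = (f u)^[j] q := by
        have hb := A.run_block w u (f u) (fun _ => rfl) (3 * k) j (fun i h1 h2 => by
          have := hletter 3 i (by omega) (by omega); simpa using this)
        rw [show 2 * k + k + j = 3 * k + j by ring, hb, hr3k]
      have hruj : A.run wu (k + j) = (f u)^[j] q := by
        rw [hrunu, show k + j = j + k by omega, Function.iterate_add_apply, hqu0]
      have hwu' : w (2 * k + k + j) = u := by
        have := hletter 3 (2 * k + k + j) (by omega) (by omega); simpa using this
      simp only [DetAut.output]
      rw [hrwj, hruj, hwu']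
    -- set inclusions
    have hsub1 : A.output w '' Set.Ico (2 * k) (2 * k + 2 * k) ⊆
        (A.output wv '' Set.Ico k (k + k)) ∪ (A.output wu '' Set.Ico k (k + k)) := by
      rintro x ⟨n, ⟨hn1, hn2⟩, rfl⟩
      rcases Nat.lt_or_ge n (2 * k + k) with hc | hc
      · left
        refine ⟨k + (n - 2 * k), ⟨by omega, by omega⟩, ?_⟩
        rw [← hcv (n - 2 * k) (by omega)]
        congr 1
        omega
      · right
        refine ⟨k + (n - (2 * k + k)), ⟨by omega, by omega⟩, ?_⟩
        rw [← hcu (n - (2 * k + k)) (by omega)]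
        congr 1
        omega
    have hsub2 : A.output wv '' Set.Ico k (k + k) ⊆
        A.output w '' Set.Ico (2 * k) (2 * k + 2 * k) := by
      rintro x ⟨n, ⟨hn1, hn2⟩, rfl⟩
      refine ⟨2 * k + (n - k), ⟨by omega, by omega⟩, ?_⟩
      rw [hcv (n - k) (by omega)]
      congr 1
      omega
    have hsub3 : A.output wu '' Set.Ico k (k + k) ⊆
        A.output w '' Set.Ico (2 * k) (2 * k + 2 * k) := by
      rintro x ⟨n, ⟨hn1, hn2⟩, rfl⟩
      refine ⟨2 * k + k + (n - k), ⟨by omega, by omega⟩, ?_⟩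
      rw [hcu (n - k) (by omega)]
      congr 1
      omega
    -- w is accepted
    have hwLG : w ∈ LG G := by
      refine ⟨v, u, hadj, 0, ?_, ?_, ?_⟩
      · intro n _
        by_cases hc : (n / k) % 2 = 0 <;> simp [hwdef, hc]
      · intro n
        refine ⟨k * (2 * n), ?_, ?_⟩
        · nlinarith
        · have := hwchar (2 * n) 0 hk
          simpa [Nat.mul_mod_right] using this
      · intro n
        refine ⟨k * (2 * n + 1), ?_, ?_⟩
        · nlinarith
        · have := hwchar (2 * n + 1) 0 hk
          have e : (2 * n + 1) % 2 = 1 := by omega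
          simpa [e] using this
    have hwAcc : RabinAccept R (A.output w) := by
      have : w ∈ RabinLang A R := by rw [h]; exact hwLG
      exact this
    -- wv and wu are rejected
    have hvnot : ¬ RabinAccept R (A.output wv) := by
      intro hacc
      have hmem : wv ∈ LG G := by rw [← h]; exact hacc
      obtain ⟨v', u', hadj', N, _, hv', hu'⟩ := hmem
      obtain ⟨m1, _, hm1⟩ := hv' 0
      obtain ⟨m2, _, hm2⟩ := hu' 0
      have e1 : v' = v := by rw [← hm1]
      have e2 : u' = v := by rw [← hm2]
      rw [e1, e2] at hadj'
      exact G.irrefl hadj'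
    have hunot : ¬ RabinAccept R (A.output wu) := by
      intro hacc
      have hmem : wu ∈ LG G := by rw [← h]; exact hacc
      obtain ⟨v', u', hadj', N, _, hv', hu'⟩ := hmem
      obtain ⟨m1, _, hm1⟩ := hv' 0
      obtain ⟨m2, _, hm2⟩ := hu' 0
      have e1 : v' = u := by rw [← hm1]
      have e2 : u' = u := by rw [← hm2]
      rw [e1, e2] at hadj'
      exact G.irrefl hadj'
    -- derive contradiction
    obtain ⟨p, hpR, ⟨x, hxI, hxE⟩, hF⟩ := hwAcc
    have hxSw : x ∈ A.output w '' Set.Ico (2 * k) (2 * k + 2 * k) := by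
      rw [← hIw]; exact hxI
    rcases hsub1 hxSw with hxv | hxu
    · refine hvnot ⟨p, hpR, ⟨x, ?_, hxE⟩, ?_⟩
      · rw [hIv]; exact hxv
      · ext y
        simp only [Set.mem_inter_iff, Set.mem_empty_iff_false, iff_false, not_and]
        intro hy1 hy2
        have hyW : y ∈ InfOcc (A.output w) ∩ p.2 := by
          refine ⟨?_, hy2⟩
          rw [hIw]
          exact hsub2 (by rw [← hIv]; exact hy1)
        rw [hF] at hyW
        exact hyW
    · refine hunot ⟨p, hpR, ⟨x, ?_, hxE⟩, ?_⟩
      · rw [hIu]; exact hxu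
      · ext y
        simp only [Set.mem_inter_iff, Set.mem_empty_iff_false, iff_false, not_and]
        intro hy1 hy2
        have hyW : y ∈ InfOcc (A.output w) ∩ p.2 := by
          refine ⟨?_, hy2⟩
          rw [hIw]
          exact hsub3 (by rw [← hIu]; exact hy1)
        rw [hF] at hyW
        exact hyW
  let C : G.Coloring Q := SimpleGraph.Coloring.mk (fun v => (f v)^[k] A.init)
    (fun {v u} hadj heq => key v u hadj heq)
  exact C.colorable.chromaticNumber_le
end

section
/- Let G = (V, E) be a finite simple undirected graph. The minimal number of states of a deterministic Rabin automaton recognising L_G is exactly the chromatic number χ(G) of G. -/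
/-!
Upper bound: given a proper colouring `c`, let the state be the colour of the previous letter and
output it together with the current letter. Once a word stays inside an edge `{v, u}`, reading `v`
after a letter of colour `c u` means a switch from `u` to `v`, so the Rabin pair of the edge asks
for infinitely many outputs `(c u, v)` and for only finitely many letters outside `{v, u}`.

Lower bound: colour a letter `v` by a state on the cycle that the run over `v^ω` eventually enters.
If adjacent `v, u` had the same colour `q`, then `v^a` and `u^b` both loop at `q`, and the word
`v^m (v^a u^b)^ω ∈ L_G` has as infinitely-often outputs the union of those of `v^ω` and `u^ω`.
A Rabin condition met by a union of two sets is met by one of them, so `v^ω` or `u^ω` would be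
accepted although neither lies in `L_G`.
-/

open Filter Function Set

section InfOcc

variable {α : Type}

lemma mem_infOcc_iff_frequently {w : ℕ → α} {a : α} :
    a ∈ InfOcc w ↔ ∃ᶠ n in atTop, w n = a :=
  frequently_atTop.symm

lemma infOcc_comp_add (w : ℕ → α) (m : ℕ) : InfOcc (fun n => w (n + m)) = InfOcc w := by
  ext a
  constructor
  · intro h n
    obtain ⟨k, hk, rfl⟩ := h n
    exact ⟨k + m, by omega, rfl⟩
  · intro h n
    obtain ⟨k, hk, rfl⟩ := h (n + m)
    exact ⟨k - m, by omega, by simp only [Nat.sub_add_cancel (by omega : m ≤ k)]⟩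

lemma infOcc_eq_range_of_periodic {w : ℕ → α} {p : ℕ} (hw : Periodic w p) (hp : 0 < p) :
    InfOcc w = range w := by
  refine subset_antisymm (fun a ha => ?_) ?_
  · obtain ⟨m, -, rfl⟩ := ha 0
    exact mem_range_self m
  · rintro _ ⟨m, rfl⟩ n
    exact ⟨m + n * p, by nlinarith, hw.nat_mul n m⟩

lemma forall_mem_infOcc_iff_eventually [Finite α] {w : ℕ → α} {P : α → Prop} :
    (∀ a ∈ InfOcc w, P a) ↔ ∀ᶠ n in atTop, P (w n) := by
  simp only [mem_infOcc_iff_frequently]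
  constructor
  · intro h
    have hrare : ∀ᶠ n in atTop, ∀ a, ¬P a → w n ≠ a :=
      eventually_all.2 fun a => by
        by_cases ha : P a
        · exact Eventually.of_forall fun _ h => absurd ha h
        · exact (not_frequently.1 (mt (h a) ha)).mono fun _ hn _ => hn
    filter_upwards [hrare] with n hn
    by_contra hP
    exact hn _ hP rfl
  · intro h a ha
    obtain ⟨n, rfl, hn⟩ := (ha.and_eventually h).exists
    exact hn

end InfOcc

lemma eventually_atTop_succ_iff {p : ℕ → Prop} :
    (∀ᶠ n in atTop, p (n + 1)) ↔ ∀ᶠ n in atTop, p n := by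
  rw [← eventually_map (m := fun n => n + 1), map_add_atTop_eq_nat]

lemma frequently_atTop_succ_iff {p : ℕ → Prop} :
    (∃ᶠ n in atTop, p (n + 1)) ↔ ∃ᶠ n in atTop, p n := by
  rw [← frequently_map (m := fun n => n + 1), map_add_atTop_eq_nat]

lemma frequently_and_not_succ {p : ℕ → Prop} (h : ∃ᶠ n in atTop, p n)
    (h' : ∃ᶠ n in atTop, ¬p n) : ∃ᶠ n in atTop, p n ∧ ¬p (n + 1) := by
  by_contra hcon
  obtain ⟨N, hN⟩ := eventually_atTop.1 (not_frequently.1 hcon)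
  obtain ⟨m, hm, hpm⟩ := frequently_atTop.1 h N
  have hstay : ∀ n, m ≤ n → p n := fun n hn =>
    Nat.le_induction hpm
      (fun k hk hpk => not_not.1 fun hk' => hN k (hm.trans hk) ⟨hpk, hk'⟩) n hn
  obtain ⟨n, hn, hpn⟩ := frequently_atTop.1 h' m
  exact hpn (hstay n hn)

lemma RabinAccept.of_infOcc_eq_union {Γ : Type} {R : List (Set Γ × Set Γ)}
    {s s₁ s₂ : ℕ → Γ} (h : RabinAccept R s) (hs : InfOcc s = InfOcc s₁ ∪ InfOcc s₂) :
    RabinAccept R s₁ ∨ RabinAccept R s₂ := by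
  obtain ⟨p, hp, ⟨x, hx, hxE⟩, hF⟩ := h
  rw [hs, union_inter_distrib_right, union_empty_iff] at hF
  rw [hs] at hx
  rcases hx with hx | hx
  · exact Or.inl ⟨p, hp, ⟨x, hx, hxE⟩, hF.1⟩
  · exact Or.inr ⟨p, hp, ⟨x, hx, hxE⟩, hF.2⟩

lemma mem_LG_iff {V : Type} (G : SimpleGraph V) {w : ℕ → V} :
    w ∈ LG G ↔ ∃ v u, G.Adj v u ∧ (∀ᶠ n in atTop, w n = v ∨ w n = u) ∧
      v ∈ InfOcc w ∧ u ∈ InfOcc w := by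
  simp only [LG, mem_ofPred_eq, eventually_atTop, InfOcc, exists_and_right]

lemma const_not_mem_LG {V : Type} (G : SimpleGraph V) (v : V) : (fun _ => v) ∉ LG G := by
  rw [mem_LG_iff]
  rintro ⟨v', u', hadj, -, hv', hu'⟩
  obtain ⟨_, _, rfl⟩ := hv' 0
  obtain ⟨_, _, rfl⟩ := hu' 0
  exact G.loopless.irrefl v hadj

namespace DetAut

variable {σ Γ Q : Type} (A : DetAut σ Γ Q)

def withInit (q : Q) : DetAut σ Γ Q := ⟨q, A.δ⟩

@[simp]
lemma withInit_init : A.withInit A.init = A := rfl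

lemma run_add (w : ℕ → σ) (m n : ℕ) :
    A.run w (n + m) = (A.withInit (A.run w m)).run (fun k => w (k + m)) n := by
  induction n with
  | zero => simp only [Nat.zero_add]; rfl
  | succ n ih => rw [Nat.add_right_comm, run, ih]; rfl

lemma output_add (w : ℕ → σ) (m n : ℕ) :
    A.output w (n + m) = (A.withInit (A.run w m)).output (fun k => w (k + m)) n := by
  simp only [output, run_add]; rfl

lemma run_congr {w w' : ℕ → σ} {n : ℕ} (h : ∀ i < n, w i = w' i) :
    A.run w n = A.run w' n := by
  induction n with
  | zero => rfl
  | succ n ih => simp only [run]; rw [ih fun i hi => h i (by omega), h n (by omega)]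

lemma output_congr {w w' : ℕ → σ} {n : ℕ} (h : ∀ i ≤ n, w i = w' i) :
    A.output w n = A.output w' n := by
  simp only [output]
  rw [A.run_congr fun i hi => h i hi.le, h n le_rfl]

lemma run_const (v : σ) (n : ℕ) :
    A.run (fun _ => v) n = (fun q => (A.δ q v).1)^[n] A.init := by
  induction n with
  | zero => rfl
  | succ n ih => rw [iterate_succ_apply', ← ih]; rfl

lemma output_periodic {w : ℕ → σ} {p : ℕ} (hw : Periodic w p) (hp : A.run w p = A.init) :
    Periodic (A.output w) p := by
  intro n
  rw [output_add, hp, withInit_init]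
  exact congrArg (A.output · n) (funext hw)

lemma infOcc_output_eq_of_run_eq {w : ℕ → σ} {m : ℕ} {q : Q} (h : A.run w m = q) :
    InfOcc (A.output w) = InfOcc ((A.withInit q).output fun k => w (k + m)) := by
  rw [← infOcc_comp_add _ m, ← h]
  simp only [output_add]

end DetAut

section AltWord

variable {σ : Type} {v u : σ} {a b : ℕ}

def altWord (v u : σ) (a b : ℕ) : ℕ → σ := fun n => if n % (a + b) < a then v else u

lemma altWord_periodic : Periodic (altWord v u a b) (a + b) := by
  intro n
  simp [altWord]

lemma altWord_of_lt {i : ℕ} (hi : i < a) : altWord v u a b i = v := by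
  simp [altWord, Nat.mod_eq_of_lt (by omega : i < a + b), hi]

lemma altWord_add_of_lt {j : ℕ} (hj : j < b) : altWord v u a b (j + a) = u := by
  simp [altWord, Nat.mod_eq_of_lt (by omega : j + a < a + b)]

lemma altWord_eq_or (n : ℕ) : altWord v u a b n = v ∨ altWord v u a b n = u := by
  unfold altWord
  split_ifs <;> simp

end AltWord

theorem DetAut.infOcc_output_altWord {σ Γ Q : Type} (A : DetAut σ Γ Q) {v u : σ} {a b : ℕ}
    (ha : 0 < a) (hb : 0 < b) (hv : A.run (fun _ => v) a = A.init)
    (hu : A.run (fun _ => u) b = A.init) :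
    InfOcc (A.output (altWord v u a b)) =
      InfOcc (A.output fun _ => v) ∪ InfOcc (A.output fun _ => u) := by
  set x := altWord v u a b
  have hxa : A.run x a = A.init := (A.run_congr fun i hi => altWord_of_lt hi).trans hv
  have hleft : ∀ i < a, A.output x i = A.output (fun _ => v) i := fun i hi =>
    A.output_congr fun k hk => altWord_of_lt (hk.trans_lt hi)
  have hright : ∀ j < b, A.output x (j + a) = A.output (fun _ => u) j := fun j hj => by
    rw [output_add, hxa, withInit_init]
    exact A.output_congr fun k hk => altWord_add_of_lt (by omega)
  have hxper : A.run x (a + b) = A.init := by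
    rw [add_comm, run_add, hxa, withInit_init, ← hu]
    exact A.run_congr fun k hk => altWord_add_of_lt hk
  have hx' := A.output_periodic altWord_periodic hxper
  have hv' := A.output_periodic (fun _ => rfl) hv
  have hu' := A.output_periodic (fun _ => rfl) hu
  rw [infOcc_eq_range_of_periodic hx' (by omega), infOcc_eq_range_of_periodic hv' ha,
    infOcc_eq_range_of_periodic hu' hb]
  apply subset_antisymm
  · rintro _ ⟨n, rfl⟩
    rw [← hx'.map_mod_nat]
    have hmod := Nat.mod_lt n (by omega : 0 < a + b)
    by_cases h : n % (a + b) < a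
    · exact Or.inl ⟨_, (hleft _ h).symm⟩
    · refine Or.inr ⟨n % (a + b) - a, ?_⟩
      rw [← hright _ (by omega), Nat.sub_add_cancel (by omega)]
  · rintro _ (⟨n, rfl⟩ | ⟨n, rfl⟩)
    · exact ⟨n % a, by rw [hleft _ (Nat.mod_lt _ ha), hv'.map_mod_nat]⟩
    · exact ⟨n % b + a, by rw [hright _ (Nat.mod_lt _ hb), hu'.map_mod_nat]⟩

section LowerBound

variable {V Γ Q : Type} {G : SimpleGraph V} {A : DetAut V Γ Q} {R : List (Set Γ × Set Γ)}

lemma not_adj_of_rabinLang_eq_LG (h : RabinLang A R = LG G) {v u : V} {q : Q} {m n a b : ℕ}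
    (ha : 0 < a) (hb : 0 < b) (hm : A.run (fun _ => v) m = q) (hn : A.run (fun _ => u) n = q)
    (hva : (A.withInit q).run (fun _ => v) a = q) (hub : (A.withInit q).run (fun _ => u) b = q) :
    ¬G.Adj v u := by
  intro hadj
  -- truncated subtraction makes `w` start with `v^m`
  set w : ℕ → V := fun k => altWord v u a b (k - m)
  have hw : (fun k => w (k + m)) = altWord v u a b := by
    funext k
    simp [w]
  have hwm : A.run w m = q :=
    (A.run_congr fun i hi => by simp [w, Nat.sub_eq_zero_of_le hi.le, altWord_of_lt ha]).trans hm
  have hwLG : w ∈ LG G := by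
    have hInf : InfOcc w = range (altWord v u a b) := by
      rw [← infOcc_comp_add w m, hw, infOcc_eq_range_of_periodic altWord_periodic (by omega)]
    refine (mem_LG_iff G).2
      ⟨v, u, hadj, Eventually.of_forall fun k => altWord_eq_or _, ?_, ?_⟩ <;> rw [hInf]
    · exact ⟨0, altWord_of_lt ha⟩
    · exact ⟨0 + a, altWord_add_of_lt hb⟩
  have hacc : RabinAccept R (A.output w) := by
    rw [← h] at hwLG
    exact hwLG
  have hunion := (A.withInit q).infOcc_output_altWord ha hb hva hub
  rw [← hw, ← A.infOcc_output_eq_of_run_eq hwm, ← A.infOcc_output_eq_of_run_eq hm,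
    ← A.infOcc_output_eq_of_run_eq hn] at hunion
  rcases hacc.of_infOcc_eq_union hunion with hv | hu
  · exact const_not_mem_LG G v (h ▸ hv)
  · exact const_not_mem_LG G u (h ▸ hu)

lemma exists_iterate_mem_periodicPts {α : Type} [Finite α] (f : α → α) (x : α) :
    ∃ n, f^[n] x ∈ periodicPts f := by
  obtain ⟨m, n, hne, heq⟩ := Finite.exists_ne_map_eq_of_infinite (f^[·] x)
  wlog hlt : m < n generalizing m n
  · exact this n m hne.symm heq.symm (by omega)
  refine ⟨m, mk_mem_periodicPts (n := n - m) (by omega) ?_⟩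
  change f^[n - m] (f^[m] x) = f^[m] x
  rw [← iterate_add_apply, Nat.sub_add_cancel hlt.le]
  exact heq.symm

theorem colorable_of_rabinLang_eq_LG [Fintype Q] (h : RabinLang A R = LG G) :
    G.Colorable (Fintype.card Q) := by
  set F : V → Q → Q := fun v q => (A.δ q v).1
  choose n hn using fun v => exists_iterate_mem_periodicPts (F v) A.init
  refine (SimpleGraph.Coloring.mk (fun v => A.run (fun _ => v) (n v))
    fun {v u} hadj hvu => ?_).colorable
  have hper : ∀ x, A.run (fun _ => x) (n x) ∈ periodicPts (F x) := fun x => by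
    rw [A.run_const]
    exact hn x
  refine not_adj_of_rabinLang_eq_LG h (minimalPeriod_pos_of_mem_periodicPts (hper v))
    (minimalPeriod_pos_of_mem_periodicPts (hper u)) rfl hvu.symm ?_ ?_ hadj
  · rw [DetAut.run_const]
    exact isPeriodicPt_minimalPeriod _ _
  · rw [DetAut.run_const, ← hvu]
    exact isPeriodicPt_minimalPeriod _ _

end LowerBound

section UpperBound

variable {V K : Type}

def colourAut (c : V → K) (k₀ : K) : DetAut V (K × V) K :=
  ⟨k₀, fun k v => (c v, (k, v))⟩

noncomputable def colourPairs [Fintype V] (G : SimpleGraph V) (c : V → K) :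
    List (Set (K × V) × Set (K × V)) :=
  (Finset.univ : Finset (V × V)).toList.map fun p =>
    ({x | G.Adj p.1 p.2 ∧ x = (c p.2, p.1)}, {x | x.2 ≠ p.1 ∧ x.2 ≠ p.2})

lemma rabinAccept_colourPairs_iff [Fintype V] {G : SimpleGraph V} {c : V → K}
    {s : ℕ → K × V} :
    RabinAccept (colourPairs G c) s ↔
      ∃ v u, G.Adj v u ∧ (c u, v) ∈ InfOcc s ∧ ∀ x ∈ InfOcc s, x.2 = v ∨ x.2 = u := by
  simp only [RabinAccept, colourPairs, List.mem_map, exists_exists_eq_and,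
    Finset.mem_toList, Finset.mem_univ, true_and]
  simp only [Prod.exists]
  refine exists₂_congr fun v u => ⟨?_, ?_⟩
  · rintro ⟨⟨_, hx, hadj, rfl⟩, hF⟩
    exact ⟨hadj, hx, fun x hx =>
      by_contra fun h => eq_empty_iff_forall_notMem.1 hF x ⟨hx, not_or.1 h⟩⟩
  · rintro ⟨hadj, hx, h⟩
    exact ⟨⟨_, hx, hadj, rfl⟩,
      eq_empty_of_forall_notMem fun x ⟨hxI, hv, hu⟩ => (h x hxI).elim hv hu⟩

theorem rabinLang_colourAut [Fintype V] [Finite K] (G : SimpleGraph V) {c : V → K}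
    (hc : ∀ {v u}, G.Adj v u → c v ≠ c u) (k₀ : K) :
    RabinLang (colourAut c k₀) (colourPairs G c) = LG G := by
  ext w
  have hs : InfOcc ((colourAut c k₀).output w) = InfOcc fun n => (c (w n), w (n + 1)) := by
    rw [← infOcc_comp_add _ 1]
    rfl
  change RabinAccept _ _ ↔ _
  rw [rabinAccept_colourPairs_iff, hs, mem_LG_iff]
  simp only [forall_mem_infOcc_iff_eventually]
  simp only [mem_infOcc_iff_frequently, Prod.mk.injEq]
  refine exists₂_congr fun v u => and_congr_right fun hadj => ?_
  rw [eventually_atTop_succ_iff (p := fun n => w n = v ∨ w n = u)]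
  constructor
  · rintro ⟨hfreq, htail⟩
    refine ⟨htail, frequently_atTop_succ_iff.1 (hfreq.mono fun n h => h.2), ?_⟩
    exact (hfreq.and_eventually htail).mono fun n ⟨⟨hcn, _⟩, hn⟩ =>
      hn.resolve_left fun hv => hc hadj (hv ▸ hcn)
  · rintro ⟨htail, hv, hu⟩
    have hturn := frequently_and_not_succ hu (hv.mono fun n hn => hn ▸ G.ne_of_adj hadj)
    refine ⟨(hturn.and_eventually (eventually_atTop_succ_iff.2 htail)).mono ?_, htail⟩
    rintro n ⟨⟨hn, hn'⟩, h⟩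
    exact ⟨congrArg c hn, h.resolve_right hn'⟩

end UpperBound

theorem colorable_iff_exists_rabinLang_eq_LG {V : Type} [Fintype V] [Nonempty V]
    (G : SimpleGraph V) (n : ℕ) :
    G.Colorable n ↔ ∃ (Q : Type) (_ : Fintype Q), Fintype.card Q = n ∧
      ∃ (Γ : Type) (A : DetAut V Γ Q) (R : List (Set Γ × Set Γ)), RabinLang A R = LG G := by
  constructor
  · rintro ⟨C⟩
    exact ⟨Fin n, inferInstance, Fintype.card_fin n, _, colourAut C (C (Classical.arbitrary V)),
      colourPairs G C, rabinLang_colourAut G C.valid _⟩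
  · rintro ⟨Q, _, rfl, Γ, A, R, h⟩
    exact colorable_of_rabinLang_eq_LG h

/-- The minimal number of states of a deterministic Rabin automaton recognising
`L_G` is exactly the chromatic number of `G`. -/
theorem stmt5 {V : Type} [Fintype V] [Nonempty V] (G : SimpleGraph V) :
    ((sInf {n : ℕ | ∃ (Q : Type) (_ : Fintype Q), Fintype.card Q = n ∧
        ∃ (Γ : Type) (A : DetAut V Γ Q) (R : List (Set Γ × Set Γ)),
          RabinLang A R = LG G} : ℕ) : ℕ∞) = G.chromaticNumber := by
  simp only [← colorable_iff_exists_rabinLang_eq_LG]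
  exact G.colorable_of_fintype.chromaticNumber_eq_sInf.symm
end

section
/- Let F be a Muller condition over a finite set of colours Γ and let M = (M, m₀, μ : M × Γ → M) be an arena-independent memory for ε-free F-games in which every state is reachable from m₀ by some finite sequence of letters. Consider the deterministic Muller automaton A_M with state set M, initial state m₀, transition function δ(m, a) = (μ(m, a), a) and acceptance condition F. Then for every pair of cycles ℓ₁, ℓ₂ of A_M with a common state, if γ(ℓ₁) ∉ F and γ(ℓ₂) ∉ F, then γ(ℓ₁ ∪ ℓ₂) ∉ F; consequently a Rabin condition can be defined on top of A_M, yielding a Rabin automaton recognising L_F with |M| states. -/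
namespace DetAut

variable {σ Γ Q : Type}

/-- The target state of the edge `e = (q, a)` of the transition graph of `A`. -/
def next (A : DetAut σ Γ Q) (e : Q × σ) : Q := (A.δ e.1 e.2).1

/-- The output colour of the edge `e = (q, a)` of the transition graph of `A`. -/
def ecol (A : DetAut σ Γ Q) (e : Q × σ) : Γ := (A.δ e.1 e.2).2

/-- `ℓ` is a cycle of `A`: some closed path in the transition graph of `A`
traverses exactly the edges of `ℓ`. -/
def IsCycle (A : DetAut σ Γ Q) (ℓ : Set (Q × σ)) : Prop :=
  ∃ (e : Q × σ) (l : List (Q × σ)),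
    List.Chain (fun e₁ e₂ => A.next e₁ = e₂.1) e l ∧
    A.next ((e :: l).getLast (List.cons_ne_nil e l)) = e.1 ∧
    {x | x ∈ e :: l} = ℓ

/-- The set of states incident to the edges of `ℓ`. -/
def statesOf (A : DetAut σ Γ Q) (ℓ : Set (Q × σ)) : Set Q :=
  {q | ∃ e ∈ ℓ, e.1 = q ∨ A.next e = q}

/-- The set of output colours appearing on the edges of `ℓ`. -/
def cycCol (A : DetAut σ Γ Q) (ℓ : Set (Q × σ)) : Set Γ :=
  A.ecol '' ℓ

/-- The language accepted by `A` with the Muller condition `F`. -/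
def MullerLang (A : DetAut σ Γ Q) (F : Set (Set Γ)) : Set (ℕ → σ) :=
  {w | InfOcc (A.output w) ∈ F}

/-- A Rabin condition can be defined on top of the Muller automaton `(A, F)`:
there is a Rabin automaton with the same states, initial state and transitions
as `A`, except for the output colours of the transitions, accepting the same
language. -/
def RabinOnTop (A : DetAut σ Γ Q) (F : Set (Set Γ)) : Prop :=
  ∃ (Γ' : Type) (out' : Q → σ → Γ') (R : List (Set Γ' × Set Γ')),
    RabinLang (DetAut.mk A.init (fun q a => ((A.δ q a).1, out' q a))) R
      = A.MullerLang F

end DetAut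

/-- A (transition-coloured) game arena with colours in `Γ`: a finite directed
graph with a partition of the vertices between Eve (`EveV`) and Adam, an
initial vertex, and a colouring of the edges by `Γ ∪ {ε}` (`ε = none`), such
that every vertex has an outgoing edge and no cycle is labelled exclusively
by `ε`. -/
structure Game (Γ : Type) where
  V : Type
  [finV : Fintype V]
  EveV : Set V
  edge : V → V → Prop
  v0 : V
  col : V → V → Option Γ
  exists_succ : ∀ v, ∃ u, edge v u
  no_eps_cycle : ¬ ∃ (v : V) (l : List V),
      List.Chain (fun a b => edge a b ∧ col a b = none) v (l ++ [v])

attribute [instance] Game.finV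

namespace Game

variable {Γ : Type}

/-- `ρ` is a play of `G`: an infinite path from the initial vertex. -/
def IsPlay (G : Game Γ) (ρ : ℕ → G.V) : Prop :=
  ρ 0 = G.v0 ∧ ∀ n, G.edge (ρ n) (ρ (n + 1))

/-- The set of colours of `Γ` produced infinitely often by the play `ρ`; this
is the set of letters occurring infinitely often in the output of `ρ` (the word
obtained from the labels of its edges after deleting the occurrences of `ε`). -/
def InfCol (G : Game Γ) (ρ : ℕ → G.V) : Set Γ :=
  {a | ∀ n, ∃ m, n ≤ m ∧ G.col (ρ m) (ρ (m + 1)) = some a}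

/-- The history of the play `ρ` before it reaches position `n`. -/
def hist (G : Game Γ) (ρ : ℕ → G.V) (n : ℕ) : List G.V :=
  List.ofFn (fun i : Fin n => ρ i.1)

/-- Eve wins the game `G` with the Muller winning condition `F`: she has a
strategy (a choice of an outgoing edge after each finite play ending in one of
her vertices) such that every play adhering to it is winning for her. -/
def WinsEve (G : Game Γ) (F : Set (Set Γ)) : Prop :=
  ∃ str : List G.V → G.V → G.V,
    (∀ h v, v ∈ G.EveV → G.edge v (str h v)) ∧
    ∀ ρ : ℕ → G.V, G.IsPlay ρ →
      (∀ n, ρ n ∈ G.EveV → ρ (n + 1) = str (G.hist ρ n) (ρ n)) →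
      G.InfCol ρ ∈ F

/-- The game `G` is `ε`-free: no edge is coloured by `ε`. -/
def EpsFree (G : Game Γ) : Prop :=
  ∀ v u, G.edge v u → G.col v u ≠ none

end Game

/-- A memory structure for the game `G`: a finite set of memory states with an
initial state, updated after reading the edges of the game. -/
structure Mem {Γ : Type} (G : Game Γ) where
  M : Type
  [finM : Fintype M]
  m0 : M
  upd : M → G.V × G.V → M

attribute [instance] Mem.finM

namespace Mem

variable {Γ : Type} {G : Game Γ}

/-- The state of the memory after the first `n` moves of the play `ρ`. -/
def st (m : Mem G) (ρ : ℕ → G.V) : ℕ → m.M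
  | 0 => m.m0
  | n + 1 => m.upd (st m ρ n) (ρ n, ρ (n + 1))

/-- The memory structure `m` sets a winning strategy in `G` for the Muller
condition `F`: there is a next-move function such that the induced strategy is
winning for Eve. -/
def SetsWinning (m : Mem G) (F : Set (Set Γ)) : Prop :=
  ∃ nm : G.V → m.M → G.V,
    (∀ v x, v ∈ G.EveV → G.edge v (nm v x)) ∧
    ∀ ρ : ℕ → G.V, G.IsPlay ρ →
      (∀ n, ρ n ∈ G.EveV → ρ (n + 1) = nm (ρ n) (st m ρ n)) →
      G.InfCol ρ ∈ F

/-- The memory structure `m` is chromatic: its update function only depends on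
the colours of the edges, and it does not move on `ε`-edges. -/
def Chromatic (m : Mem G) : Prop :=
  ∃ μ' : m.M → Γ → m.M, ∀ x v u, G.edge v u →
    (G.col v u = none → m.upd x (v, u) = x) ∧
    ∀ a, G.col v u = some a → m.upd x (v, u) = μ' x a

end Mem

/-- An arena-independent memory skeleton: a finite set of memory states with an
initial state, updated by reading colours of `Γ`. -/
structure MemSkel (Γ : Type) where
  M : Type
  [finM : Fintype M]
  m0 : M
  upd : M → Γ → M

attribute [instance] MemSkel.finM

namespace MemSkel

variable {Γ : Type}

/-- The (chromatic) memory structure induced by the skeleton `s` on the game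
`G`: the memory is updated by the colour of the edge read, and does not move
on `ε`-edges. -/
def toMem (s : MemSkel Γ) (G : Game Γ) : Mem G where
  M := s.M
  finM := s.finM
  m0 := s.m0
  upd := fun x e =>
    match G.col e.1 e.2 with
    | none => x
    | some a => s.upd x a

/-- `s` is an arena-independent memory for the Muller condition `F`: for every
`F`-game won by Eve, the induced memory sets a winning strategy. -/
def ArenaIndep (s : MemSkel Γ) (F : Set (Set Γ)) : Prop :=
  ∀ G : Game Γ, G.WinsEve F → (s.toMem G).SetsWinning F

/-- `s` is an arena-independent memory for `ε`-free `F`-games. -/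
def ArenaIndepEf (s : MemSkel Γ) (F : Set (Set Γ)) : Prop :=
  ∀ G : Game Γ, G.EpsFree → G.WinsEve F → (s.toMem G).SetsWinning F

end MemSkel

/-- `memGen F`: the least `n` such that every `F`-game won by Eve admits a
winning strategy set by a memory structure with `n` states. -/
noncomputable def memGen {Γ : Type} (F : Set (Set Γ)) : ℕ :=
  sInf {n | ∀ G : Game Γ, G.WinsEve F →
    ∃ m : Mem G, Fintype.card m.M = n ∧ m.SetsWinning F}

/-- `memGenEf F`: as `memGen F`, quantifying only over `ε`-free games. -/
noncomputable def memGenEf {Γ : Type} (F : Set (Set Γ)) : ℕ :=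
  sInf {n | ∀ G : Game Γ, G.EpsFree → G.WinsEve F →
    ∃ m : Mem G, Fintype.card m.M = n ∧ m.SetsWinning F}

/-- `memChrom F`: the least `n` such that every `F`-game won by Eve admits a
winning strategy set by a chromatic memory with `n` states. -/
noncomputable def memChrom {Γ : Type} (F : Set (Set Γ)) : ℕ :=
  sInf {n | ∀ G : Game Γ, G.WinsEve F →
    ∃ m : Mem G, Fintype.card m.M = n ∧ m.Chromatic ∧ m.SetsWinning F}

/-- `memChromEf F`: as `memChrom F`, quantifying only over `ε`-free games. -/
noncomputable def memChromEf {Γ : Type} (F : Set (Set Γ)) : ℕ :=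
  sInf {n | ∀ G : Game Γ, G.EpsFree → G.WinsEve F →
    ∃ m : Mem G, Fintype.card m.M = n ∧ m.Chromatic ∧ m.SetsWinning F}

/-- `memInd F`: the least size of an arena-independent memory for `F`. -/
noncomputable def memInd {Γ : Type} (F : Set (Set Γ)) : ℕ :=
  sInf {n | ∃ s : MemSkel Γ, Fintype.card s.M = n ∧ s.ArenaIndep F}

/-- `memIndEf F`: the least size of an arena-independent memory for `ε`-free
`F`-games. -/
noncomputable def memIndEf {Γ : Type} (F : Set (Set Γ)) : ℕ :=
  sInf {n | ∃ s : MemSkel Γ, Fintype.card s.M = n ∧ s.ArenaIndepEf F}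

/-- The deterministic Muller automaton `A_M` built on the memory skeleton `s`:
states `s.M`, initial state `s.m0`, transitions `δ(m, a) = (s.upd m a, a)`. -/
def AM {Γ : Type} (s : MemSkel Γ) : DetAut Γ Γ s.M :=
  DetAut.mk s.m0 (fun m a => (s.upd m a, a))


/-!
Suppose two rejecting cycles `ℓ₁, ℓ₂` of `A_M` share a state `q` but their union is accepting.
Read them as loops `u₁, u₂` at `q`, and build the flower game: a stem reading a word from `m₀`
to `q`, then a centre from which Eve repeatedly picks one of the petals `u₁, u₂`. Alternating
the petals wins, so `M` must implement a winning strategy; but `M` is in state `q` at every visit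
of the centre, so that strategy always picks the same petal and sees the colours of a single
rejecting cycle.

For the Rabin condition, the transitions taken infinitely often form a cycle `I`. Each set `C` of
transitions gets the pair (transitions of `C` on no rejecting cycle inside `C`, complement of `C`).
By the union property an accepting cycle is not covered by its rejecting subcycles, so the pair
of `I` is satisfied when `I` is accepting, while a rejecting `I` satisfies no pair.
-/

open Filter

theorem mem_infOcc_iff {α : Type} {u : ℕ → α} {a : α} :
    a ∈ InfOcc u ↔ ∃ᶠ n in atTop, u n = a :=
  frequently_atTop.symm

theorem eventually_mem_infOcc {α : Type} [Finite α] (u : ℕ → α) :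
    ∀ᶠ n in atTop, u n ∈ InfOcc u := by
  have h : ∀ a, ∀ᶠ n in atTop, u n = a → a ∈ InfOcc u := fun a => by
    by_cases ha : a ∈ InfOcc u
    · exact .of_forall fun _ _ => ha
    · exact (not_frequently.1 (mt mem_infOcc_iff.2 ha)).mono fun n hn h => absurd h hn
  exact (eventually_all.2 h).mono fun n hn => hn _ rfl

theorem image_infOcc {α β : Type} [Finite α] (f : α → β) (u : ℕ → α) :
    f '' InfOcc u = InfOcc (f ∘ u) := by
  ext b
  constructor
  · rintro ⟨a, ha, rfl⟩
    exact mem_infOcc_iff.2 ((mem_infOcc_iff.1 ha).mono fun n hn => by simp [hn])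
  · intro hb
    obtain ⟨n, hn, hmem⟩ :=
      ((mem_infOcc_iff.1 hb).and_eventually (eventually_mem_infOcc u)).exists
    exact ⟨u n, hmem, hn⟩

theorem infOcc_eq_image_Ico_of_periodic {α : Type} {u : ℕ → α} {N P : ℕ} (hP : 0 < P)
    (hper : ∀ n, N ≤ n → u (n + P) = u n) : InfOcc u = u '' Set.Ico N (N + P) := by
  have hmul : ∀ k n, N ≤ n → u (n + k * P) = u n := fun k => by
    induction k with
    | zero => simp
    | succ k ih => intro n hn; rw [add_mul, one_mul, ← add_assoc, hper _ (by omega), ih n hn]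
  ext a
  constructor
  · intro ha
    obtain ⟨m, hm, rfl⟩ := ha N
    refine ⟨N + (m - N) % P, ⟨by omega, by have := Nat.mod_lt (m - N) hP; omega⟩, ?_⟩
    rw [← hmul ((m - N) / P) _ (by omega), add_assoc, Nat.mod_add_div']
    congr 1
    omega
  · rintro ⟨i, ⟨hi, -⟩, rfl⟩ n
    exact ⟨i + n * P, by nlinarith, hmul n i hi⟩

theorem exists_Ico_image_eq_infOcc {α : Type} [Finite α] (u : ℕ → α) :
    ∃ N d, 0 < d ∧ u (N + d) = u N ∧ u '' Set.Ico N (N + d) = InfOcc u := by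
  obtain ⟨N, hN⟩ := (eventually_mem_infOcc u).exists_forall_of_atTop
  have hcover : ∀ᶠ M in atTop, ∀ a ∈ InfOcc u, a ∈ u '' Set.Ico N M := by
    refine eventually_all.2 fun a => ?_
    by_cases ha : a ∈ InfOcc u
    · obtain ⟨m, hm, hma⟩ := ha N
      exact (eventually_gt_atTop m).mono fun M hM _ => ⟨m, ⟨hm, hM⟩, hma⟩
    · exact .of_forall fun _ h => absurd h ha
  obtain ⟨M, ⟨hMu, hMcov⟩, hMN⟩ := (((mem_infOcc_iff.1 (hN N le_rfl)).and_eventually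
    hcover).and_eventually (eventually_gt_atTop N)).exists
  refine ⟨N, M - N, by omega, by rwa [Nat.add_sub_cancel' hMN.le], subset_antisymm ?_ ?_⟩
  · rintro _ ⟨n, ⟨hn, -⟩, rfl⟩
    exact hN n hn
  · rw [Nat.add_sub_cancel' hMN.le]
    exact hMcov

theorem List.isChain_append_singleton_iff {α : Type} {R : α → α → Prop} {L : List α} {x : α} :
    (L ++ [x]).IsChain R ↔ L.IsChain R ∧ ∀ y ∈ L.getLast?, R y x := by
  simp [List.isChain_append]

theorem List.IsChain.exists_mem_rel {α : Type} {R : α → α → Prop} {L : List α} {e x : α}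
    (hch : (L ++ [e]).IsChain R) (he : e ∈ L) (hx : x ∈ L) : ∃ y ∈ L, R x y := by
  obtain ⟨L₁, L₂, rfl⟩ := List.append_of_mem hx
  cases L₂ with
  | nil => exact ⟨e, he, (List.isChain_append_singleton_iff.1 hch).2 x (by simp)⟩
  | cons y L₂ =>
    rw [List.append_assoc, List.cons_append, List.cons_append] at hch
    exact ⟨y, by simp, (List.isChain_append_cons_cons.1 hch).2.1⟩

theorem List.foldl_take_add_one {α β : Type} (f : β → α → β) (x : β) (l : List α) {i : ℕ}
    (hi : i < l.length) : (l.take (i + 1)).foldl f x = f ((l.take i).foldl f x) l[i] := by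
  rw [List.take_add_one, List.getElem?_eq_getElem hi, Option.toList_some, List.foldl_append,
    List.foldl_cons, List.foldl_nil]

namespace DetAut

variable {σ Γ Q : Type} {A : DetAut σ Γ Q}

variable (A) in
def Follows (e f : Q × σ) : Prop := A.next e = f.1

theorem isCycle_iff {ℓ : Set (Q × σ)} :
    A.IsCycle ℓ ↔ ∃ e l, ((e :: l) ++ [e]).IsChain A.Follows ∧ {x | x ∈ e :: l} = ℓ := by
  refine exists₂_congr fun e l => ?_
  rw [← and_assoc, List.isChain_append_singleton_iff,
    List.getLast?_eq_some_getLast (List.cons_ne_nil e l)]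
  simp only [Option.mem_def, Option.some.injEq, forall_eq']
  rfl

theorem cycCol_union (ℓ₁ ℓ₂ : Set (Q × σ)) : A.cycCol (ℓ₁ ∪ ℓ₂) = A.cycCol ℓ₁ ∪ A.cycCol ℓ₂ :=
  Set.image_union _ _ _

theorem IsCycle.exists_rooted {ℓ : Set (Q × σ)} (hℓ : A.IsCycle ℓ) {q : Q}
    (hq : q ∈ A.statesOf ℓ) :
    ∃ e l, e.1 = q ∧ ((e :: l) ++ [e]).IsChain A.Follows ∧ {x | x ∈ e :: l} = ℓ := by
  obtain ⟨e, l, hch, rfl⟩ := isCycle_iff.1 hℓ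
  obtain ⟨g, hg, rfl⟩ : ∃ g ∈ e :: l, g.1 = q := by
    obtain ⟨f, hf, rfl | rfl⟩ := hq
    · exact ⟨f, hf, rfl⟩
    · obtain ⟨g, hg, hfg⟩ := hch.exists_mem_rel List.mem_cons_self hf
      exact ⟨g, hg, hfg.symm⟩
  obtain ⟨L₁, L₂, hsplit⟩ := List.append_of_mem hg
  have hrot : ((e :: l : List _) : Cycle (Q × σ)) = (g :: (L₂ ++ L₁) : List _) := by
    rw [hsplit, Cycle.coe_eq_coe]
    exact List.isRotated_append
  refine ⟨g, L₂ ++ L₁, rfl, ?_, ?_⟩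
  · have := (Cycle.chain_coe_cons A.Follows e l).2 hch
    rwa [hrot, Cycle.chain_coe_cons] at this
  · ext x
    simp only [Set.mem_ofPred_eq, hsplit, List.mem_cons, List.mem_append]
    tauto

theorem isChain_append_singleton_of_fst_eq {L : List (Q × σ)} {a b : Q × σ}
    (h : (L ++ [a]).IsChain A.Follows) (hab : a.1 = b.1) : (L ++ [b]).IsChain A.Follows := by
  rw [List.isChain_append_singleton_iff] at h ⊢
  exact ⟨h.1, fun y hy => (h.2 y hy).trans hab⟩

theorem IsCycle.union {ℓ₁ ℓ₂ : Set (Q × σ)} (h₁ : A.IsCycle ℓ₁) (h₂ : A.IsCycle ℓ₂)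
    (h : (A.statesOf ℓ₁ ∩ A.statesOf ℓ₂).Nonempty) : A.IsCycle (ℓ₁ ∪ ℓ₂) := by
  obtain ⟨q, hq₁, hq₂⟩ := h
  obtain ⟨e₁, l₁, he₁, hc₁, rfl⟩ := h₁.exists_rooted hq₁
  obtain ⟨e₂, l₂, he₂, hc₂, rfl⟩ := h₂.exists_rooted hq₂
  have hc₁' := isChain_append_singleton_of_fst_eq hc₁ (he₁.trans he₂.symm)
  have hc₂' := isChain_append_singleton_of_fst_eq hc₂ (he₂.trans he₁.symm)
  refine isCycle_iff.2 ⟨e₁, l₁ ++ e₂ :: l₂, ?_, by ext; simp [or_assoc]⟩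
  obtain ⟨hpre, -, hjoin⟩ := List.isChain_append.1 hc₁'
  have := List.isChain_append.2 ⟨hpre, hc₂', fun x hx y hy => hjoin x hx y (by simpa using hy)⟩
  simpa using this

theorem run_eq_of_fst_δ_eq {Γ' : Type} {B : DetAut σ Γ' Q}
    (hinit : A.init = B.init) (hδ : ∀ q a, (A.δ q a).1 = (B.δ q a).1) (w : ℕ → σ) :
    A.run w = B.run w := by
  funext n
  induction n with
  | zero => exact hinit
  | succ n ih => simp only [run, ih, hδ]

variable (A)

def runEdge (w : ℕ → σ) (n : ℕ) : Q × σ := (A.run w n, w n)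

theorem isCycle_infOcc_runEdge [Finite Q] [Finite σ] (w : ℕ → σ) :
    A.IsCycle (InfOcc (A.runEdge w)) := by
  obtain ⟨N, d, hd, hper, himg⟩ := exists_Ico_image_eq_infOcc (A.runEdge w)
  obtain ⟨d, rfl⟩ : ∃ d', d = d' + 1 := ⟨d - 1, by omega⟩
  have hL : A.runEdge w N :: (List.range' (N + 1) d).map (A.runEdge w)
      = (List.range' N (d + 1)).map (A.runEdge w) := by
    simp [List.range'_succ]
  have hclosed : (List.range' N (d + 1)).map (A.runEdge w) ++ [A.runEdge w N]
      = (List.range' N (d + 2)).map (A.runEdge w) := by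
    rw [List.range'_concat (n := d + 1), List.map_append, List.map_singleton, one_mul, hper]
  refine isCycle_iff.2 ⟨A.runEdge w N, (List.range' (N + 1) d).map (A.runEdge w), ?_, ?_⟩
  · rw [hL, hclosed, List.isChain_map]
    exact (List.isChain_range' N _ 1).imp fun a b (h : b = a + 1) => by subst h; rfl
  · rw [hL, ← himg]
    ext x
    simp [List.mem_range'_1]

variable (F : Set (Set Γ))

def RejectingCyclesClosedUnderUnion : Prop :=
  ∀ ℓ₁ ℓ₂ : Set (Q × σ), A.IsCycle ℓ₁ → A.IsCycle ℓ₂ →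
    (A.statesOf ℓ₁ ∩ A.statesOf ℓ₂).Nonempty →
    A.cycCol ℓ₁ ∉ F → A.cycCol ℓ₂ ∉ F → A.cycCol (ℓ₁ ∪ ℓ₂) ∉ F

def rejectingCover (C : Set (Q × σ)) : Set (Q × σ) :=
  ⋃₀ {R | A.IsCycle R ∧ A.cycCol R ∉ F ∧ R ⊆ C}

variable {A F}

theorem exists_rejecting_superset_of_isChain (hU : A.RejectingCyclesClosedUnderUnion F)
    {C : Set (Q × σ)} (hC : C ⊆ A.rejectingCover F C) :
    ∀ {L : List (Q × σ)}, L ≠ [] → L.IsChain A.Follows → (∀ x ∈ L, x ∈ C) →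
      ∃ R, A.IsCycle R ∧ A.cycCol R ∉ F ∧ R ⊆ C ∧ ∀ x ∈ L, x ∈ R
  | [], h, _, _ => absurd rfl h
  | [e], _, _, hL => by
    obtain ⟨R, ⟨hR, hRF, hRC⟩, he⟩ := hC (hL e List.mem_cons_self)
    exact ⟨R, hR, hRF, hRC, by simpa using he⟩
  | e :: f :: L, _, hch, hL => by
    obtain ⟨hef, hch⟩ := List.isChain_cons_cons.1 hch
    obtain ⟨R, hR, hRF, hRC, hfL⟩ := exists_rejecting_superset_of_isChain hU hC
      (List.cons_ne_nil f L) hch fun x hx => hL x (List.mem_cons_of_mem e hx)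
    obtain ⟨Re, ⟨hRe, hReF, hReC⟩, he⟩ := hC (hL e List.mem_cons_self)
    have hshare : (A.statesOf Re ∩ A.statesOf R).Nonempty :=
      ⟨A.next e, ⟨e, he, Or.inr rfl⟩, ⟨f, hfL f List.mem_cons_self, Or.inl hef.symm⟩⟩
    refine ⟨Re ∪ R, hRe.union hR hshare, hU Re R hRe hR hshare hReF hRF,
      Set.union_subset hReC hRC, ?_⟩
    intro x hx
    rcases List.mem_cons.1 hx with rfl | hx
    · exact Or.inl he
    · exact Or.inr (hfL x hx)

theorem IsCycle.not_subset_rejectingCover (hU : A.RejectingCyclesClosedUnderUnion F)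
    {C : Set (Q × σ)} (hC : A.IsCycle C) (hF : A.cycCol C ∈ F) :
    ¬ C ⊆ A.rejectingCover F C := by
  intro hcov
  obtain ⟨e, l, hch, rfl⟩ := isCycle_iff.1 hC
  obtain ⟨R, -, hRF, hRC, hR⟩ := exists_rejecting_superset_of_isChain hU hcov
    (List.cons_ne_nil e l) (List.isChain_append.1 hch).1 fun x hx => hx
  exact hRF (by rwa [hRC.antisymm hR])

variable (A F) in
def rabinPairs (Cs : List (Set (Q × σ))) : List (Set (Q × σ) × Set (Q × σ)) :=
  Cs.map fun C => (C \ A.rejectingCover F C, Cᶜ)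

theorem rabinAccept_runEdge_iff [Finite Q] [Finite σ] (hU : A.RejectingCyclesClosedUnderUnion F)
    {Cs : List (Set (Q × σ))} (hCs : ∀ C, C ∈ Cs) (w : ℕ → σ) :
    RabinAccept (A.rabinPairs F Cs) (A.runEdge w) ↔ InfOcc (A.output w) ∈ F := by
  have hcyc := A.isCycle_infOcc_runEdge w
  have hcol : A.cycCol (InfOcc (A.runEdge w)) = InfOcc (A.output w) :=
    image_infOcc A.ecol (A.runEdge w)
  rw [← hcol]
  constructor
  · rintro ⟨_, hp, hne, hempty⟩
    obtain ⟨C, -, rfl⟩ := List.mem_map.1 hp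
    obtain ⟨e, heI, -, he⟩ := hne
    have hIC : InfOcc (A.runEdge w) ⊆ C := fun x hx => by
      by_contra h
      exact (Set.eq_empty_iff_forall_notMem.1 hempty) x ⟨hx, h⟩
    by_contra hF
    exact he ⟨_, ⟨hcyc, hF, hIC⟩, heI⟩
  · intro hF
    obtain ⟨e, heI, he⟩ := Set.not_subset.1 (hcyc.not_subset_rejectingCover hU hF)
    exact ⟨_, List.mem_map.2 ⟨_, hCs _, rfl⟩, ⟨e, heI, heI, he⟩, Set.inter_compl_self _⟩

theorem rabinOnTop_of_rejectingCyclesClosedUnderUnion [Finite Q] [Finite σ]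
    (hU : A.RejectingCyclesClosedUnderUnion F) : A.RabinOnTop F := by
  obtain ⟨Cs, -, hCs⟩ := Finite.exists_univ_list (Set (Q × σ))
  refine ⟨Q × σ, Prod.mk, A.rabinPairs F Cs, Set.ext fun w => ?_⟩
  have hrun := run_eq_of_fst_δ_eq (A := A)
    (B := DetAut.mk A.init fun q a => ((A.δ q a).1, (q, a))) rfl (fun _ _ => rfl) w
  show RabinAccept _ (fun n => (_, w n)) ↔ _
  rw [← hrun]
  exact rabinAccept_runEdge_iff hU hCs w

end DetAut

namespace Game

variable {Γ : Type} {G : Game Γ} {F : Set (Set Γ)}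

theorem winsEve_of_isPlay (hEve : ∀ v, v ∈ G.EveV) {ρ : ℕ → G.V} (hρ : G.IsPlay ρ)
    (hF : G.InfCol ρ ∈ F) : G.WinsEve F := by
  classical
  refine ⟨fun h v => if v = ρ h.length then ρ (h.length + 1) else (G.exists_succ v).choose,
    fun h v _ => ?_, fun ρ' hρ' hadh => ?_⟩
  · dsimp only
    split_ifs with hv
    · exact hv ▸ hρ.2 _
    · exact (G.exists_succ v).choose_spec
  · have : ρ' = ρ := by
      funext n
      induction n with
      | zero => exact hρ'.1.trans hρ.1.symm
      | succ n ih => rw [hadh n (hEve _)]; simp [hist, ih]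
    rwa [this]

end Game

namespace Mem

variable {Γ : Type} {G : Game Γ} (m : Mem G)

theorem st_eq_of_upd_eq (lab : G.V → m.M) (h0 : lab G.v0 = m.m0)
    (hupd : ∀ v u, G.edge v u → m.upd (lab v) (v, u) = lab u) {ρ : ℕ → G.V}
    (hρ : G.IsPlay ρ) : ∀ n, m.st ρ n = lab (ρ n)
  | 0 => by rw [hρ.1, h0]; rfl
  | n + 1 => by rw [st, st_eq_of_upd_eq lab h0 hupd hρ n, hupd _ _ (hρ.2 n)]

theorem SetsWinning.exists_positional {m : Mem G} {F : Set (Set Γ)} (hwin : m.SetsWinning F)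
    (hEve : ∀ v, v ∈ G.EveV) (lab : G.V → m.M) (h0 : lab G.v0 = m.m0)
    (hupd : ∀ v u, G.edge v u → m.upd (lab v) (v, u) = lab u) :
    ∃ f : G.V → G.V, (∀ v, G.edge v (f v)) ∧ G.InfCol (fun n => f^[n] G.v0) ∈ F := by
  obtain ⟨nm, hnm, hwin⟩ := hwin
  let f v := nm v (lab v)
  have hplay : G.IsPlay fun n => f^[n] G.v0 := ⟨rfl, fun n => by
    dsimp only
    rw [Function.iterate_succ_apply']
    exact hnm _ _ (hEve _)⟩
  refine ⟨f, fun v => hnm v _ (hEve v), hwin _ hplay fun n _ => ?_⟩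
  rw [m.st_eq_of_upd_eq lab h0 hupd hplay, Function.iterate_succ_apply']

end Mem

theorem MemSkel.toMem_upd_of_col_eq_some {Γ : Type} (s : MemSkel Γ) {G : Game Γ} {v u : G.V}
    {a : Γ} (h : G.col v u = some a) (x : s.M) : (s.toMem G).upd x (v, u) = s.upd x a := by
  simp [toMem, h]

structure Flower (Γ : Type) where
  stem : List Γ
  petal : Bool → List Γ
  two_le_length_petal : ∀ b, 2 ≤ (petal b).length

namespace Flower

variable {Γ : Type} (fl : Flower Γ)

/-- `inl j`: the first `j` letters of the stem have been read, `inl (Fin.last _)` being the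
centre; `inr ⟨b, i⟩`: the first `i + 1` letters of petal `b` have been read since the centre. -/
abbrev Vertex : Type := Fin (fl.stem.length + 1) ⊕ Σ b, Fin ((fl.petal b).length - 1)

def center : fl.Vertex := .inl (Fin.last _)

def start : fl.Vertex := .inl 0

def step (b : Bool) : fl.Vertex → fl.Vertex
  | .inl j =>
    if h : j.1 < fl.stem.length then .inl ⟨j.1 + 1, by omega⟩
    else .inr ⟨b, 0, by have := fl.two_le_length_petal b; omega⟩
  | .inr ⟨b', i⟩ =>
    if h : i.1 + 1 < (fl.petal b').length - 1 then .inr ⟨b', i.1 + 1, h⟩ else fl.center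

def letter (b : Bool) : fl.Vertex → Γ
  | .inl j =>
    if h : j.1 < fl.stem.length then fl.stem[j.1]
    else (fl.petal b)[0]'(by have := fl.two_le_length_petal b; omega)
  | .inr ⟨b', i⟩ => (fl.petal b')[i.1 + 1]'(by omega)

theorem step_center (b : Bool) :
    fl.step b fl.center = .inr ⟨b, 0, by have := fl.two_le_length_petal b; omega⟩ := by
  simp [step, center]

theorem letter_center (b : Bool) :
    fl.letter b fl.center = (fl.petal b)[0]'(by have := fl.two_le_length_petal b; omega) := by
  simp [letter, center]

theorem step_eq_of_ne_center {v : fl.Vertex} (hv : v ≠ fl.center) (b b' : Bool) :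
    fl.step b v = fl.step b' v ∧ fl.letter b v = fl.letter b' v := by
  rcases v with j | ⟨b'', i⟩
  · have hj : j.1 < fl.stem.length := by
      by_contra h
      exact hv (congrArg Sum.inl (Fin.ext (by simp; omega)))
    simp [step, letter, hj]
  · exact ⟨rfl, rfl⟩

def col (v u : fl.Vertex) : Option Γ :=
  if u = fl.step true v then some (fl.letter true v)
  else if u = fl.step false v then some (fl.letter false v) else none

theorem col_step (b : Bool) (v : fl.Vertex) : fl.col v (fl.step b v) = some (fl.letter b v) := by
  cases b
  · by_cases hv : v = fl.center
    · subst hv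
      simp [col, step_center]
    · obtain ⟨hstep, hletter⟩ := fl.step_eq_of_ne_center hv false true
      simp [col, hstep, hletter]
  · simp [col]

def game : Game Γ where
  V := fl.Vertex
  EveV := Set.univ
  edge v u := ∃ b, u = fl.step b v
  v0 := fl.start
  col := fl.col
  exists_succ v := ⟨_, true, rfl⟩
  no_eps_cycle := by
    rintro ⟨v, l, hch⟩
    obtain ⟨u, l', hl⟩ := List.exists_cons_of_ne_nil (List.concat_ne_nil v l)
    replace hch : (v :: (l ++ [v])).IsChain _ := hch
    rw [hl, List.isChain_cons_cons] at hch
    obtain ⟨⟨b, rfl⟩, hnone⟩ := hch.1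
    simp [col_step] at hnone

theorem epsFree_game : fl.game.EpsFree := by
  rintro v _ ⟨b, rfl⟩
  exact (fl.col_step b v).trans_ne (Option.some_ne_none _)

section Memory

variable (s : MemSkel Γ)

def memLabel : fl.Vertex → s.M
  | .inl j => (fl.stem.take j).foldl s.upd s.m0
  | .inr ⟨b, i⟩ => ((fl.petal b).take (i + 1)).foldl s.upd (fl.stem.foldl s.upd s.m0)

theorem memLabel_center : fl.memLabel s fl.center = fl.stem.foldl s.upd s.m0 := by
  simp [memLabel, center]

theorem upd_memLabel
    (hpetal : ∀ b, (fl.petal b).foldl s.upd (fl.stem.foldl s.upd s.m0) = fl.stem.foldl s.upd s.m0)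
    (b : Bool) (v : fl.Vertex) :
    s.upd (fl.memLabel s v) (fl.letter b v) = fl.memLabel s (fl.step b v) := by
  have hlen := fl.two_le_length_petal
  rcases v with j | ⟨b', i⟩
  · by_cases hj : j.1 < fl.stem.length
    · simp [memLabel, step, letter, hj, List.foldl_take_add_one _ _ _ hj]
    · have hjL : j.1 = fl.stem.length := by omega
      simp [memLabel, step, letter, hjL,
        List.foldl_take_add_one _ _ (fl.petal b) (i := 0) (by have := hlen b; omega)]
  · by_cases hi : i.1 + 1 < (fl.petal b').length - 1
    · simp [memLabel, step, letter, hi,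
        List.foldl_take_add_one _ _ (fl.petal b') (i := i.1 + 1) (by omega)]
    · have hi' : i.1 + 1 + 1 = (fl.petal b').length := by omega
      simp only [step, hi, dite_false, memLabel_center]
      simp only [memLabel, letter]
      rw [← List.foldl_take_add_one s.upd _ (fl.petal b') (by omega), hi', List.take_length, hpetal]

end Memory

/-- The flag is the petal to take at the next visit of the centre; leaving the centre replaces
it by `t` of itself. -/
def move (t : Bool → Bool) (x : fl.Vertex × Bool) : fl.Vertex × Bool :=
  (fl.step x.2 x.1, if x.1 = fl.center then t x.2 else x.2)

def stateLetter (x : fl.Vertex × Bool) : Γ := fl.letter x.2 x.1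

def play (t : Bool → Bool) (b : Bool) (n : ℕ) : fl.Vertex := ((fl.move t)^[n] (fl.start, b)).1

theorem iterate_move_start (t : Bool → Bool) (b : Bool) {j : ℕ} (hj : j ≤ fl.stem.length) :
    (fl.move t)^[j] (fl.start, b) = (.inl ⟨j, by omega⟩, b) := by
  induction j with
  | zero => rfl
  | succ j ih =>
    rw [Function.iterate_succ_apply', ih (by omega)]
    have hne : (Sum.inl ⟨j, by omega⟩ : fl.Vertex) ≠ fl.center := by
      simp [center, Fin.ext_iff]
      omega
    simp [move, step, hne, show j < fl.stem.length by omega]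

theorem iterate_move_center (t : Bool → Bool) (b : Bool) {i : ℕ}
    (hi : i < (fl.petal b).length - 1) :
    (fl.move t)^[i + 1] (fl.center, b) = (.inr ⟨b, i, hi⟩, t b) := by
  induction i with
  | zero => simp [move, step_center]
  | succ i ih =>
    rw [Function.iterate_succ_apply', ih (by omega)]
    simp [move, step, center, hi]

theorem iterate_move_center_length (t : Bool → Bool) (b : Bool) :
    (fl.move t)^[(fl.petal b).length] (fl.center, b) = (fl.center, t b) := by
  obtain ⟨i, hi⟩ : ∃ i, (fl.petal b).length = i + 2 :=
    ⟨_, (Nat.sub_add_cancel (fl.two_le_length_petal b)).symm⟩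
  rw [hi, Function.iterate_succ_apply', fl.iterate_move_center t b (i := i) (by omega)]
  simp [move, step, center, hi]

theorem stateLetter_iterate_move_center (t : Bool → Bool) (b : Bool) {i : ℕ}
    (hi : i < (fl.petal b).length) :
    fl.stateLetter ((fl.move t)^[i] (fl.center, b)) = (fl.petal b)[i] := by
  cases i with
  | zero => exact fl.letter_center b
  | succ i => rw [fl.iterate_move_center t b (by omega)]; rfl

theorem image_stateLetter_iterate_move_center (t : Bool → Bool) (b : Bool) :
    (fun i => fl.stateLetter ((fl.move t)^[i] (fl.center, b))) '' Set.Iio (fl.petal b).length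
      = {a | a ∈ fl.petal b} := by
  ext a
  simp only [Set.mem_image, Set.mem_Iio, Set.mem_ofPred_eq, List.mem_iff_getElem]
  constructor
  · rintro ⟨i, hi, rfl⟩
    exact ⟨i, hi, (fl.stateLetter_iterate_move_center t b hi).symm⟩
  · rintro ⟨i, hi, rfl⟩
    exact ⟨i, hi, fl.stateLetter_iterate_move_center t b hi⟩

theorem isPlay_play (t : Bool → Bool) (b : Bool) : fl.game.IsPlay (fl.play t b) :=
  ⟨rfl, fun n => ⟨_, by rw [play, play, Function.iterate_succ_apply']; rfl⟩⟩

theorem infCol_play (t : Bool → Bool) (b : Bool) :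
    fl.game.InfCol (fl.play t b)
      = InfOcc fun n => fl.stateLetter ((fl.move t)^[n] (fl.start, b)) := by
  have hcol : ∀ n, fl.game.col (fl.play t b n) (fl.play t b (n + 1))
      = some (fl.stateLetter ((fl.move t)^[n] (fl.start, b))) := fun n => by
    rw [play, play, Function.iterate_succ_apply']
    exact fl.col_step _ _
  ext a
  simp only [Game.InfCol, InfOcc, Set.mem_ofPred_eq, hcol, Option.some.injEq]

theorem infCol_play_of_iterate_eq (t : Bool → Bool) (b : Bool) {P : ℕ} (hP : 0 < P)
    (hper : (fl.move t)^[P] (fl.center, b) = (fl.center, b)) :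
    fl.game.InfCol (fl.play t b)
      = (fun i => fl.stateLetter ((fl.move t)^[i] (fl.center, b))) '' Set.Iio P := by
  have hstart : ∀ k, (fl.move t)^[fl.stem.length + k] (fl.start, b)
      = (fl.move t)^[k] (fl.center, b) := fun k => by
    rw [add_comm, Function.iterate_add_apply, fl.iterate_move_start t b le_rfl]
    rfl
  rw [fl.infCol_play, infOcc_eq_image_Ico_of_periodic hP (N := fl.stem.length) ?_]
  · ext a
    constructor
    · rintro ⟨n, ⟨h₁, h₂⟩, rfl⟩
      obtain ⟨k, rfl⟩ := Nat.exists_eq_add_of_le h₁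
      exact ⟨k, by simp only [Set.mem_Iio]; omega, by simp only [hstart]⟩
    · rintro ⟨k, hk, rfl⟩
      exact ⟨fl.stem.length + k, ⟨by omega, by simp only [Set.mem_Iio] at hk; omega⟩,
        by simp only [hstart]⟩
  · intro n hn
    obtain ⟨k, rfl⟩ := Nat.exists_eq_add_of_le hn
    simp only [add_assoc, hstart, Function.iterate_add_apply, hper]

theorem play_id (b : Bool) : fl.play id b = fun n => (fl.step b)^[n] fl.start := by
  funext n
  suffices ∀ v, (fl.move id)^[n] (v, b) = ((fl.step b)^[n] v, b) by simp [play, this]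
  induction n with
  | zero => exact fun _ => rfl
  | succ n ih => intro v; simp [Function.iterate_succ_apply', ih, move]

theorem infCol_play_id (b : Bool) : fl.game.InfCol (fl.play id b) = {a | a ∈ fl.petal b} := by
  rw [fl.infCol_play_of_iterate_eq id b (by have := fl.two_le_length_petal b; omega)
    (fl.iterate_move_center_length id b), fl.image_stateLetter_iterate_move_center]

theorem infCol_play_not :
    fl.game.InfCol (fl.play not true) = {a | a ∈ fl.petal true} ∪ {a | a ∈ fl.petal false} := by
  have hround : (fl.move not)^[(fl.petal false).length + (fl.petal true).length] (fl.center, true)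
      = (fl.center, true) := by
    rw [Function.iterate_add_apply, fl.iterate_move_center_length]
    exact fl.iterate_move_center_length not false
  rw [fl.infCol_play_of_iterate_eq not true (by have := fl.two_le_length_petal true; omega) hround,
    ← fl.image_stateLetter_iterate_move_center not true,
    ← fl.image_stateLetter_iterate_move_center not false]
  ext a
  simp only [Set.mem_image, Set.mem_Iio, Set.mem_union]
  constructor
  · rintro ⟨i, hi, rfl⟩
    by_cases h : i < (fl.petal true).length
    · exact Or.inl ⟨i, h, rfl⟩
    · obtain ⟨k, rfl⟩ := Nat.exists_eq_add_of_le (not_lt.1 h)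
      refine Or.inr ⟨k, by omega, ?_⟩
      rw [add_comm, Function.iterate_add_apply, fl.iterate_move_center_length]
      rfl
  · rintro (⟨i, hi, rfl⟩ | ⟨k, hk, rfl⟩)
    · exact ⟨i, by omega, rfl⟩
    · refine ⟨k + (fl.petal true).length, by omega, ?_⟩
      rw [Function.iterate_add_apply, fl.iterate_move_center_length]
      rfl

theorem eq_step_of_forall_edge {f : fl.Vertex → fl.Vertex} (hf : ∀ v, fl.game.edge v (f v)) :
    ∃ b, f = fl.step b := by
  obtain ⟨b, hb⟩ := hf fl.center
  refine ⟨b, funext fun v => ?_⟩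
  obtain ⟨b', hb'⟩ := hf v
  by_cases hv : v = fl.center
  · subst hv
    exact hb
  · rw [hb', (fl.step_eq_of_ne_center hv b' b).1]

theorem exists_petal_mem_of_arenaIndepEf {F : Set (Set Γ)} (s : MemSkel Γ)
    (hs : s.ArenaIndepEf F)
    (hpetal : ∀ b, (fl.petal b).foldl s.upd (fl.stem.foldl s.upd s.m0) = fl.stem.foldl s.upd s.m0)
    (hunion : {a | a ∈ fl.petal true} ∪ {a | a ∈ fl.petal false} ∈ F) :
    ∃ b, {a | a ∈ fl.petal b} ∈ F := by
  have hwin : fl.game.WinsEve F := Game.winsEve_of_isPlay (fun _ => trivial)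
    (fl.isPlay_play not true) (fl.infCol_play_not ▸ hunion)
  obtain ⟨f, hf, hfF⟩ := (hs _ fl.epsFree_game hwin).exists_positional (fun _ => trivial)
    (fl.memLabel s) rfl fun v u ⟨b, hu⟩ => by
      subst hu
      have hcol : fl.game.col v (fl.step b v) = some (fl.letter b v) := fl.col_step b v
      rw [MemSkel.toMem_upd_of_col_eq_some s hcol]
      exact fl.upd_memLabel s hpetal b v
  obtain ⟨b, rfl⟩ := fl.eq_step_of_forall_edge hf
  exact ⟨b, fl.infCol_play_id b ▸ fl.play_id b ▸ hfF⟩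

end Flower

namespace AM

variable {Γ : Type} {s : MemSkel Γ}

theorem foldl_map_snd_of_isChain : ∀ {e : s.M × Γ} {l : List (s.M × Γ)} {x : s.M × Γ},
    ((e :: l) ++ [x]).IsChain (AM s).Follows → ((e :: l).map Prod.snd).foldl s.upd e.1 = x.1
  | _, [], _, h => (List.isChain_cons_cons.1 h).1
  | e, f :: l, x, h => by
    obtain ⟨hef, h⟩ := List.isChain_cons_cons.1 h
    show ((f :: l).map Prod.snd).foldl s.upd (s.upd e.1 e.2) = x.1
    rw [show s.upd e.1 e.2 = f.1 from hef]
    exact foldl_map_snd_of_isChain h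

theorem exists_loop_of_isCycle {ℓ : Set (s.M × Γ)} (hℓ : (AM s).IsCycle ℓ) {q : s.M}
    (hq : q ∈ (AM s).statesOf ℓ) :
    ∃ u : List Γ, u ≠ [] ∧ u.foldl s.upd q = q ∧ {a | a ∈ u} = (AM s).cycCol ℓ := by
  obtain ⟨e, l, rfl, hch, rfl⟩ := hℓ.exists_rooted hq
  refine ⟨(e :: l).map Prod.snd, by simp, foldl_map_snd_of_isChain hch, ?_⟩
  ext a
  simp [DetAut.cycCol, DetAut.ecol, AM, eq_comm]

theorem rejectingCyclesClosedUnderUnion {F : Set (Set Γ)} (hind : s.ArenaIndepEf F)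
    (hreach : ∀ x : s.M, ∃ l : List Γ, l.foldl s.upd s.m0 = x) :
    (AM s).RejectingCyclesClosedUnderUnion F := by
  rintro ℓ₁ ℓ₂ h₁ h₂ ⟨q, hq₁, hq₂⟩ hr₁ hr₂ hacc
  obtain ⟨u₁, hu₁, hq₁, hcol₁⟩ := exists_loop_of_isCycle h₁ hq₁
  obtain ⟨u₂, hu₂, hq₂, hcol₂⟩ := exists_loop_of_isCycle h₂ hq₂
  obtain ⟨l₀, rfl⟩ := hreach q
  have hlen₁ := List.length_pos_iff.2 hu₁
  have hlen₂ := List.length_pos_iff.2 hu₂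
  -- doubled so that every petal has a vertex besides the centre
  let fl : Flower Γ := ⟨l₀, fun b => cond b (u₁ ++ u₁) (u₂ ++ u₂), fun b => by
    cases b <;> simp only [cond, List.length_append] <;> omega⟩
  rw [DetAut.cycCol_union, ← hcol₁, ← hcol₂] at hacc
  obtain ⟨b, hb⟩ := fl.exists_petal_mem_of_arenaIndepEf s hind
    (fun b => by cases b <;> simp [fl, List.foldl_append, hq₁, hq₂]) (by simpa [fl] using hacc)
  cases b
  · exact hr₂ (by simpa [fl, hcol₂] using hb)
  · exact hr₁ (by simpa [fl, hcol₁] using hb)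

end AM

/-- If `s` is an arena-independent memory for `ε`-free `F`-games in which every
state is reachable from the initial one, then in the Muller automaton `A_M`
the union of two intersecting rejecting cycles is rejecting; consequently a
Rabin condition can be defined on top of `A_M`, yielding a Rabin automaton
recognising `L_F` with `|M|` states. -/
theorem stmt14 {Γ : Type} [Fintype Γ] (F : Set (Set Γ)) (s : MemSkel Γ)
    (hind : s.ArenaIndepEf F)
    (hreach : ∀ x : s.M, ∃ l : List Γ, l.foldl s.upd s.m0 = x) :
    (∀ ℓ₁ ℓ₂ : Set (s.M × Γ),
        (AM s).IsCycle ℓ₁ → (AM s).IsCycle ℓ₂ →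
        ((AM s).statesOf ℓ₁ ∩ (AM s).statesOf ℓ₂).Nonempty →
        (AM s).cycCol ℓ₁ ∉ F → (AM s).cycCol ℓ₂ ∉ F →
        (AM s).cycCol (ℓ₁ ∪ ℓ₂) ∉ F) ∧
    (∃ (Γ' : Type) (out' : s.M → Γ → Γ') (R : List (Set Γ' × Set Γ')),
        RabinLang (DetAut.mk s.m0 (fun m a => (s.upd m a, out' m a))) R
          = LF F) := by
  have hU := AM.rejectingCyclesClosedUnderUnion hind hreach
  exact ⟨hU, (AM s).rabinOnTop_of_rejectingCyclesClosedUnderUnion hU⟩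
end

section
/- For every integer n ≥ 2, the Muller condition F_n = {A ⊆ {1,…,n} : |A| > 1} over the set of colours Γ_n = {1,…,n} satisfies mem_gen^ε-free(F_n) = 2 and mem_gen(F_n) = n. In particular, every ε-free F_n-game won by Eve admits a winning strategy set by a memory structure of size 2, while there is an F_n-game (with ε-transitions) won by Eve in which every memory structure setting a winning strategy has at least n states. -/
/-!
Let `W` be the set of vertices from which Eve wins. For a colour `c`, `rank c v` measures how
long Adam can keep every colour other than `c` away from `v` while Eve stays in `W`; since Eve
wins from every vertex of `W`, this is finite. From a vertex of `W`, every move of Adam, and some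
move of Eve, either shows a colour other than `c` or decreases `rank c`. So if Eve makes progress
towards `d` whenever the play eventually shows only `d`, it cannot eventually show only `d`.

Remembering the last colour `d` tells Eve which progress to make. In an `ε`-free game one bit
suffices: fix a default move at each vertex `v`, of colour `χ v`; Eve plays it unless the last
colour already was `χ v`, and then makes progress towards `χ v`.

For the lower bounds: without memory Eve cannot alternate between two cycles of different
colours; and in `forbiddingGame`, where the `ε`-moves let Adam show one colour per round, Eve
must forbid at a single vertex the colour shown last, so with fewer memory states than colours
some colour is never forbidden.
-/

open Filter

/-- The Muller condition `F_n` of the paper, over an arbitrary finite set of colours. -/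
def atLeastTwo (Γ : Type) : Set (Set Γ) := {A | 1 < A.ncard}

theorem List.not_isChain_cycle_of_lt {V : Type} {r : V → V → Prop} (f : V → ℕ)
    (hf : ∀ a b, r a b → f b < f a) (v : V) (l : List V) :
    ¬ List.IsChain r (v :: (l ++ [v])) := by
  intro h
  have hlt : List.Pairwise (fun a b => f b < f a) (v :: (l ++ [v])) :=
    List.isChain_iff_pairwise.1 (h.imp fun a b hab => hf a b hab)
  exact lt_irrefl _ (List.pairwise_cons.1 hlt |>.1 v (by simp))

theorem exists_isChain_cycle {V : Type} [Finite V] {r : V → V → Prop} (σ : ℕ → V)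
    (hσ : ∀ k, r (σ k) (σ (k + 1))) : ∃ v l, List.IsChain r (v :: (l ++ [v])) := by
  obtain ⟨i, j, hij, hσij⟩ := Finite.exists_ne_map_eq_of_infinite σ
  wlog hlt : i < j generalizing i j
  · exact this j i hij.symm hσij.symm (by omega)
  obtain ⟨q, rfl⟩ : ∃ q, j = i + q + 1 := ⟨j - i - 1, by omega⟩
  refine ⟨σ i, (List.range q).map fun k => σ (i + (k + 1)), ?_⟩
  have hcycle : σ i :: ((List.range q).map (fun k => σ (i + (k + 1))) ++ [σ i]) =
      (List.range (q + 2)).map fun k => σ (i + k) := by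
    rw [List.range_succ_eq_map, List.range_succ]
    simp [Function.comp_def, ← Nat.add_assoc, ← hσij]
  rw [hcycle, List.isChain_map, List.isChain_range]
  intro m _
  exact hσ (i + m)

def splice {α : Type} (ρ : ℕ → α) (t : ℕ) (σ : ℕ → α) : ℕ → α :=
  fun k => if k < t then ρ k else σ (k - t)

theorem splice_of_lt {α : Type} {ρ σ : ℕ → α} {t k : ℕ} (hk : k < t) :
    splice ρ t σ k = ρ k :=
  if_pos hk

theorem splice_add {α : Type} (ρ σ : ℕ → α) (t k : ℕ) : splice ρ t σ (t + k) = σ k := by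
  simp [splice]

theorem splice_of_le {α : Type} {ρ σ : ℕ → α} {t k : ℕ} (hσ : σ 0 = ρ t) (hk : k ≤ t) :
    splice ρ t σ k = ρ k := by
  rcases hk.lt_or_eq with hk | rfl
  · exact splice_of_lt hk
  · simpa [splice] using hσ

def runFrom {V S : Type} (v : V) (s₀ : S) (upd : S → V × V → S) (next : V → S → V) :
    ℕ → V × S
  | 0 => (v, s₀)
  | t + 1 =>
    let p := runFrom v s₀ upd next t
    (next p.1 p.2, upd p.2 (p.1, next p.1 p.2))

theorem Mem.st_runFrom {Γ : Type} {G : Game Γ} (m : Mem G) (v : G.V) (next : G.V → m.M → G.V)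
    (t : ℕ) :
    m.st (fun k => (runFrom v m.m0 m.upd next k).1) t = (runFrom v m.m0 m.upd next t).2 := by
  induction t with
  | zero => rfl
  | succ t ih => exact congrArg (m.upd · _) ih

def MemSkel.lastColour (Γ : Type) [Fintype Γ] (c₀ : Γ) : MemSkel Γ where
  M := Γ
  m0 := c₀
  upd _ a := a

theorem MemSkel.lastColour_st_succ {Γ : Type} [Fintype Γ] (c₀ : Γ) {G : Game Γ} (ρ : ℕ → G.V)
    (t : ℕ) : ((lastColour Γ c₀).toMem G).st ρ (t + 1) =
      (G.col (ρ t) (ρ (t + 1))).getD (((lastColour Γ c₀).toMem G).st ρ t) := by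
  change (match G.col (ρ t) (ρ (t + 1)) with | none => _ | some a => a) = _
  cases G.col (ρ t) (ρ (t + 1)) <;> rfl

namespace Game

section

variable {Γ : Type} (G : Game Γ)

theorem mem_infCol_iff {ρ : ℕ → G.V} {a : Γ} :
    a ∈ G.InfCol ρ ↔ ∃ᶠ t in atTop, G.col (ρ t) (ρ (t + 1)) = some a :=
  frequently_atTop.symm

theorem infCol_comp_add (ρ : ℕ → G.V) (s : ℕ) :
    G.InfCol (fun t => ρ (t + s)) = G.InfCol ρ := by
  ext a
  simp only [mem_infCol_iff, Nat.add_right_comm _ 1 s]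
  exact (frequently_map (m := fun t => t + s)
    (P := fun t => G.col (ρ t) (ρ (t + 1)) = some a)).symm.trans (by rw [map_add_atTop_eq_nat])

theorem frequently_col_ne_none {ρ : ℕ → G.V} (hρ : ∀ t, G.edge (ρ t) (ρ (t + 1))) :
    ∃ᶠ t in atTop, G.col (ρ t) (ρ (t + 1)) ≠ none := by
  intro hε
  obtain ⟨N, hN⟩ := (eventually_atTop.1 (hε.mono fun _ h => not_not.1 h))
  exact G.no_eps_cycle <| exists_isChain_cycle (fun k => ρ (N + k))
    fun k => ⟨hρ (N + k), hN (N + k) (Nat.le_add_right N k)⟩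

theorem one_lt_ncard_infCol_iff [Finite Γ] {ρ : ℕ → G.V}
    (hρ : ∀ t, G.edge (ρ t) (ρ (t + 1))) :
    1 < (G.InfCol ρ).ncard ↔
      ∀ d, ¬ ∀ᶠ t in atTop, ∀ a ∈ G.col (ρ t) (ρ (t + 1)), a = d := by
  rw [Set.one_lt_ncard]
  constructor
  · rintro ⟨a, ha, b, hb, hab⟩ d hd
    have only_d : ∀ c ∈ G.InfCol ρ, c = d := fun c hc =>
      ((G.mem_infCol_iff.1 hc).and_eventually hd).exists.elim fun _ h => h.2 c h.1
    exact hab ((only_d a ha).trans (only_d b hb).symm)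
  · intro h
    by_contra! hle
    obtain ⟨d, hd⟩ : (G.InfCol ρ).Nonempty := by
      by_contra! hempty
      refine G.frequently_col_ne_none hρ ?_
      filter_upwards [eventually_all.2 fun a =>
        not_frequently.1 (G.mem_infCol_iff.not.1 (hempty ▸ Set.notMem_empty a))] with t ht
      exact not_not_intro (Option.eq_none_iff_forall_ne_some.2 ht)
    refine h d (eventually_all.2 fun a => ?_)
    by_cases had : a = d
    · exact Eventually.of_forall fun _ _ => had
    · filter_upwards [not_frequently.1 (G.mem_infCol_iff.not.1 fun ha => had (hle a ha d hd))]
        with t ht hat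
      exact absurd hat ht

theorem hist_succ (ρ : ℕ → G.V) (t : ℕ) : G.hist ρ (t + 1) = G.hist ρ t ++ [ρ t] := by
  simp only [hist, List.ofFn_succ', List.concat_eq_append]
  rfl

theorem hist_length (ρ : ℕ → G.V) (t : ℕ) : (G.hist ρ t).length = t := by
  simp [hist]

theorem hist_getLast? (ρ : ℕ → G.V) (t : ℕ) : (G.hist ρ (t + 1)).getLast? = some (ρ t) := by
  rw [hist_succ, List.getLast?_concat]

theorem hist_splice_of_le {ρ σ : ℕ → G.V} {t k : ℕ} (hk : k ≤ t) :
    G.hist (splice ρ t σ) k = G.hist ρ k :=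
  congrArg List.ofFn (funext fun i => splice_of_lt (by omega))

theorem hist_splice_add (ρ σ : ℕ → G.V) (t s : ℕ) :
    G.hist (splice ρ t σ) (t + s) = G.hist ρ t ++ G.hist σ s := by
  rw [hist, List.ofFn_add]
  congr 1
  · exact G.hist_splice_of_le le_rfl
  · exact congrArg List.ofFn (funext fun i => splice_add ρ σ t i)

theorem infCol_splice (ρ σ : ℕ → G.V) (t : ℕ) : G.InfCol (splice ρ t σ) = G.InfCol σ := by
  rw [← G.infCol_comp_add _ t]
  simp_rw [Nat.add_comm _ t, splice_add]

theorem hist_runFrom (v : G.V) (next : G.V → List G.V → G.V) (t : ℕ) :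
    G.hist (fun k => (runFrom v [] (fun h e => h ++ [e.1]) next k).1) t =
      (runFrom v [] (fun h e => h ++ [e.1]) next t).2 := by
  induction t with
  | zero => rfl
  | succ t ih => rw [hist_succ, ih]; rfl

def IsWinningFrom (F : Set (Set Γ)) (v : G.V) (str : List G.V → G.V → G.V) : Prop :=
  (∀ h w, w ∈ G.EveV → G.edge w (str h w)) ∧
    ∀ ρ : ℕ → G.V, (ρ 0 = v ∧ ∀ n, G.edge (ρ n) (ρ (n + 1))) →
      (∀ n, ρ n ∈ G.EveV → ρ (n + 1) = str (G.hist ρ n) (ρ n)) →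
      G.InfCol ρ ∈ F

def winRegion (F : Set (Set Γ)) : Set G.V := {v | ∃ str, G.IsWinningFrom F v str}

theorem v0_mem_winRegion {F : Set (Set Γ)} (h : G.WinsEve F) : G.v0 ∈ G.winRegion F := h

theorem mem_winRegion_of_prefix {F : Set (Set Γ)} {v : G.V} {str : List G.V → G.V → G.V}
    (hstr : G.IsWinningFrom F v str) {ρ : ℕ → G.V} {t : ℕ} (h0 : ρ 0 = v)
    (hedge : ∀ k < t, G.edge (ρ k) (ρ (k + 1)))
    (hfollow : ∀ k < t, ρ k ∈ G.EveV → ρ (k + 1) = str (G.hist ρ k) (ρ k)) :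
    ρ t ∈ G.winRegion F := by
  refine ⟨fun h => str (G.hist ρ t ++ h), fun h w hw => hstr.1 _ w hw, ?_⟩
  rintro σ ⟨hσ0, hσ⟩ hσfollow
  have low : ∀ k ≤ t, splice ρ t σ k = ρ k := fun k => splice_of_le hσ0
  have high : ∀ s, splice ρ t σ (t + s) = σ s := splice_add ρ σ t
  rw [← G.infCol_splice ρ σ t]
  refine hstr.2 _ ⟨(low 0 (Nat.zero_le t)).trans h0, fun n => ?_⟩ fun n hn => ?_
  · rcases Nat.lt_or_ge n t with hn | hn
    · rw [low n hn.le, low (n + 1) hn]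
      exact hedge n hn
    · obtain ⟨s, rfl⟩ := Nat.exists_eq_add_of_le hn
      rw [high, Nat.add_assoc, high]
      exact hσ s
  · rcases Nat.lt_or_ge n t with hnt | hnt
    · rw [low n hnt.le] at hn
      rw [low n hnt.le, low (n + 1) hnt, G.hist_splice_of_le hnt.le]
      exact hfollow n hnt hn
    · obtain ⟨s, rfl⟩ := Nat.exists_eq_add_of_le hnt
      rw [high] at hn
      rw [high, Nat.add_assoc, high, hist_splice_add]
      exact hσfollow s hn

theorem mem_winRegion_of_adam_edge {F : Set (Set Γ)} {v u : G.V} (hv : v ∈ G.winRegion F)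
    (hA : v ∉ G.EveV) (he : G.edge v u) : u ∈ G.winRegion F := by
  obtain ⟨str, hstr⟩ := hv
  exact G.mem_winRegion_of_prefix hstr (ρ := fun k => if k = 0 then v else u) (t := 1) rfl
    (fun k hk => by simpa [Nat.lt_one_iff.1 hk] using he)
    (fun k hk hE => absurd (by simpa [Nat.lt_one_iff.1 hk] using hE) hA)

end

section

open Classical

variable {Γ : Type} (G : Game Γ)

/-- `G.monoTrap c k`: winning positions from which Adam can make the next `k` edges carry no
colour other than `c`, whatever winning moves Eve makes. -/
def monoTrap (c : Γ) : ℕ → Set G.V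
  | 0 => G.winRegion (atLeastTwo Γ)
  | k + 1 => {v | v ∈ G.winRegion (atLeastTwo Γ) ∧
      (v ∈ G.EveV → ∀ u, G.edge v u → u ∈ G.winRegion (atLeastTwo Γ) →
        (∀ a ∈ G.col v u, a = c) ∧ u ∈ monoTrap c k) ∧
      (v ∉ G.EveV → ∃ u, G.edge v u ∧ (∀ a ∈ G.col v u, a = c) ∧ u ∈ monoTrap c k)}

noncomputable def rank (c : Γ) (v : G.V) : ℕ := sInf {k | v ∉ G.monoTrap c (k + 1)}

def IsProgress (c : Γ) (v u : G.V) : Prop :=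
  (∃ a ∈ G.col v u, a ≠ c) ∨ G.rank c u < G.rank c v

variable {G}

theorem monoTrap_subset_winRegion (c : Γ) : ∀ k, G.monoTrap c k ⊆ G.winRegion (atLeastTwo Γ)
  | 0 => subset_rfl
  | _ + 1 => fun _ hv => hv.1

theorem monoTrap_succ_subset (c : Γ) : ∀ k, G.monoTrap c (k + 1) ⊆ G.monoTrap c k
  | 0 => fun _ hv => hv.1
  | k + 1 => fun _ ⟨hv, hE, hA⟩ =>
    ⟨hv, fun h u he hu => (hE h u he hu).imp_right (monoTrap_succ_subset c k ·),
      fun h => (hA h).imp fun _ ⟨he, hc, hu⟩ => ⟨he, hc, monoTrap_succ_subset c k hu⟩⟩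

theorem mem_monoTrap_of_le_rank {c : Γ} {u : G.V} (hu : u ∈ G.winRegion (atLeastTwo Γ))
    {k : ℕ} (hk : k ≤ G.rank c u) : u ∈ G.monoTrap c k := by
  cases k with
  | zero => exact hu
  | succ k => exact not_not.1 (Nat.notMem_of_lt_sInf hk)

theorem isProgress_of_not_stuck {c : Γ} {v u : G.V} (hu : u ∈ G.winRegion (atLeastTwo Γ))
    (h : ¬ ((∀ a ∈ G.col v u, a = c) ∧ u ∈ G.monoTrap c (G.rank c v))) :
    G.IsProgress c v u := by
  by_contra hp
  simp only [IsProgress, not_or, not_exists, not_and, not_not, not_lt] at hp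
  exact h ⟨hp.1, mem_monoTrap_of_le_rank hu hp.2⟩

variable [Finite Γ]

/-- If the traps stabilise, Adam can keep the colours in `{c}` forever against Eve's winning
strategy from any position of the trap, which is impossible. -/
theorem monoTrap_eq_empty_of_succ_eq {c : Γ} {K : ℕ}
    (hK : G.monoTrap c (K + 1) = G.monoTrap c K) : G.monoTrap c K = ∅ := by
  refine Set.eq_empty_of_forall_notMem fun v hv => ?_
  obtain ⟨str, hstr⟩ := monoTrap_subset_winRegion c K hv
  let adam : G.V → G.V := fun w =>
    if h : ∃ u, G.edge w u ∧ (∀ a ∈ G.col w u, a = c) ∧ u ∈ G.monoTrap c K then h.choose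
    else (G.exists_succ w).choose
  let next : G.V → List G.V → G.V := fun w h => if w ∈ G.EveV then str h w else adam w
  let ρ : ℕ → G.V := fun t => (runFrom v [] (fun h e => h ++ [e.1]) next t).1
  have hnext : ∀ t, ρ (t + 1) = next (ρ t) (G.hist ρ t) := fun t => by
    rw [G.hist_runFrom]; rfl
  have hfollow : ∀ t, ρ t ∈ G.EveV → ρ (t + 1) = str (G.hist ρ t) (ρ t) := fun t hE => by
    rw [hnext]; exact if_pos hE
  have hadam : ∀ t, ρ t ∉ G.EveV → ρ (t + 1) = adam (ρ t) := fun t hA => by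
    rw [hnext]; exact if_neg hA
  have hedge : ∀ t, G.edge (ρ t) (ρ (t + 1)) := fun t => by
    by_cases hE : ρ t ∈ G.EveV
    · rw [hfollow t hE]; exact hstr.1 _ _ hE
    · rw [hadam t hE]
      unfold adam; split_ifs with h
      exacts [h.choose_spec.1, (G.exists_succ _).choose_spec]
  have hwin : ∀ t, ρ t ∈ G.winRegion (atLeastTwo Γ) := fun t =>
    G.mem_winRegion_of_prefix hstr rfl (fun k _ => hedge k) (fun k _ => hfollow k)
  have hstep : ∀ t, ρ t ∈ G.monoTrap c K →
      (∀ a ∈ G.col (ρ t) (ρ (t + 1)), a = c) ∧ ρ (t + 1) ∈ G.monoTrap c K := by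
    intro t ht
    rw [← hK] at ht
    by_cases hE : ρ t ∈ G.EveV
    · exact ht.2.1 hE _ (hedge t) (hwin (t + 1))
    · have h := ht.2.2 hE
      rw [hadam t hE]
      unfold adam
      rw [dif_pos h]
      exact h.choose_spec.2
  have htrap : ∀ t, ρ t ∈ G.monoTrap c K := fun t => by
    induction t with
    | zero => exact hv
    | succ t ih => exact (hstep t ih).2
  exact (G.one_lt_ncard_infCol_iff hedge).1 (hstr.2 ρ ⟨rfl, hedge⟩ hfollow) c
    (Eventually.of_forall fun t => (hstep t (htrap t)).1)

theorem exists_monoTrap_eq_empty (c : Γ) : ∃ K, G.monoTrap c K = ∅ := by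
  obtain ⟨i, j, hij, heq⟩ := Finite.exists_ne_map_eq_of_infinite (G.monoTrap c)
  wlog hlt : i < j generalizing i j
  · exact this j i hij.symm heq.symm (by omega)
  have hanti : Antitone (G.monoTrap c) := antitone_nat_of_succ_le (monoTrap_succ_subset c)
  refine ⟨i, monoTrap_eq_empty_of_succ_eq ((hanti (Nat.le_succ i)).antisymm ?_)⟩
  rw [heq]
  exact hanti hlt

theorem notMem_monoTrap_rank_succ (c : Γ) (v : G.V) : v ∉ G.monoTrap c (G.rank c v + 1) :=
  Nat.sInf_mem <| (exists_monoTrap_eq_empty c).elim fun K hK =>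
    ⟨K, fun hv => (hK ▸ monoTrap_succ_subset c K hv : v ∈ (∅ : Set G.V))⟩

theorem exists_isProgress {v : G.V} (hv : v ∈ G.winRegion (atLeastTwo Γ)) (hE : v ∈ G.EveV)
    (c : Γ) : ∃ u, G.edge v u ∧ u ∈ G.winRegion (atLeastTwo Γ) ∧ G.IsProgress c v u := by
  by_contra! h
  exact notMem_monoTrap_rank_succ c v ⟨hv, fun _ u he hu =>
    not_not.1 fun hstuck => h u he hu (isProgress_of_not_stuck hu hstuck), fun hA => absurd hE hA⟩

theorem isProgress_of_adam_edge {v u : G.V} (hv : v ∈ G.winRegion (atLeastTwo Γ))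
    (hA : v ∉ G.EveV) (he : G.edge v u) (c : Γ) : G.IsProgress c v u :=
  by_contra fun hp => notMem_monoTrap_rank_succ c v ⟨hv, fun hE => absurd hE hA,
    fun _ => ⟨u, he, not_not.1 fun hstuck =>
      hp (isProgress_of_not_stuck (mem_winRegion_of_adam_edge G hv hA he) hstuck)⟩⟩

variable (G)

noncomputable def progressMove (c : Γ) (v : G.V) : G.V :=
  if h : v ∈ G.winRegion (atLeastTwo Γ) ∧ v ∈ G.EveV then (exists_isProgress h.1 h.2 c).choose
  else (G.exists_succ v).choose

theorem edge_progressMove (c : Γ) (v : G.V) : G.edge v (G.progressMove c v) := by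
  unfold progressMove
  split_ifs with h
  exacts [(exists_isProgress h.1 h.2 c).choose_spec.1, (G.exists_succ v).choose_spec]

variable {G}

theorem progressMove_spec {c : Γ} {v : G.V} (hv : v ∈ G.winRegion (atLeastTwo Γ))
    (hE : v ∈ G.EveV) :
    G.progressMove c v ∈ G.winRegion (atLeastTwo Γ) ∧ G.IsProgress c v (G.progressMove c v) := by
  rw [progressMove, dif_pos ⟨hv, hE⟩]
  exact (exists_isProgress hv hE c).choose_spec.2

/-- If the play eventually shows only `d`, every later move decreases `rank d`. -/
theorem infCol_mem_of_progressMove {ρ : ℕ → G.V} (hplay : G.IsPlay ρ)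
    (hv0 : G.v0 ∈ G.winRegion (atLeastTwo Γ))
    (hmove : ∀ t, ρ t ∈ G.EveV → ∃ c, ρ (t + 1) = G.progressMove c (ρ t))
    (htowards : ∀ d, (∀ᶠ t in atTop, ∀ a ∈ G.col (ρ t) (ρ (t + 1)), a = d) →
      ∀ᶠ t in atTop, ρ t ∈ G.EveV → ρ (t + 1) = G.progressMove d (ρ t)) :
    G.InfCol ρ ∈ atLeastTwo Γ := by
  have hwin : ∀ t, ρ t ∈ G.winRegion (atLeastTwo Γ) := fun t => by
    induction t with
    | zero => exact hplay.1 ▸ hv0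
    | succ t ih =>
      by_cases hE : ρ t ∈ G.EveV
      · obtain ⟨c, hc⟩ := hmove t hE
        exact hc ▸ (progressMove_spec ih hE).1
      · exact mem_winRegion_of_adam_edge G ih hE (hplay.2 t)
  refine (G.one_lt_ncard_infCol_iff hplay.2).2 fun d hd => ?_
  have hdesc : ∀ᶠ t in atTop, G.rank d (ρ (t + 1)) < G.rank d (ρ t) := by
    filter_upwards [hd, htowards d hd] with t hcol hmv
    have hp : G.IsProgress d (ρ t) (ρ (t + 1)) := by
      by_cases hE : ρ t ∈ G.EveV
      · rw [hmv hE]; exact (progressMove_spec (hwin t) hE).2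
      · exact isProgress_of_adam_edge (hwin t) hE (hplay.2 t) d
    exact hp.resolve_left fun ⟨a, ha, hne⟩ => hne (hcol a ha)
  obtain ⟨T, hT⟩ := hdesc.exists_forall_of_atTop
  obtain ⟨s, hs⟩ := WellFounded.not_rel_apply_succ (r := (· < ·))
    fun s => G.rank d (ρ (T + s))
  exact hs (hT (T + s) (Nat.le_add_right T s))

end

section

open Classical

variable {Γ : Type} (G : Game Γ)

noncomputable def matchMem (χ : G.V → Γ) : Mem G where
  M := Bool
  m0 := false
  upd _ e := decide (G.col e.1 e.2 = some (χ e.2))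

/-- Eve plays the progress move towards the last colour shown: once the play only shows `d`,
that colour is `d` for good. -/
theorem exists_mem_card_eq_setsWinning [Fintype Γ] [Nonempty Γ] (hG : G.WinsEve (atLeastTwo Γ)) :
    ∃ m : Mem G, Fintype.card m.M = Fintype.card Γ ∧ m.SetsWinning (atLeastTwo Γ) := by
  let c₀ : Γ := Classical.arbitrary Γ
  let m := (MemSkel.lastColour Γ c₀).toMem G
  refine ⟨m, rfl, fun v x => G.progressMove x v, fun v x _ => G.edge_progressMove x v, ?_⟩
  intro ρ hplay hfollow
  refine infCol_mem_of_progressMove hplay (G.v0_mem_winRegion hG)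
    (fun t hE => ⟨_, hfollow t hE⟩) fun d hd => ?_
  obtain ⟨T, hT⟩ := eventually_atTop.1 hd
  obtain ⟨T', hT'T, hT'⟩ := frequently_atTop.1 (G.frequently_col_ne_none hplay.2) T
  obtain ⟨a, ha⟩ := Option.ne_none_iff_exists'.1 hT'
  have hst : ∀ t, T' < t → m.st ρ t = d := by
    intro t ht
    induction t, ht using Nat.le_induction with
    | base => rw [MemSkel.lastColour_st_succ, ha]; exact hT T' hT'T a ha
    | succ t ht ih =>
      rw [MemSkel.lastColour_st_succ]
      cases hcol : G.col (ρ t) (ρ (t + 1)) with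
      | none => exact ih
      | some b => exact hT t (by omega) b hcol
  filter_upwards [eventually_gt_atTop T'] with t ht hE
  rw [hfollow t hE, hst t ht]

/-- Eve's default move from `v` has colour `χ v`; she plays it unless the last colour was already
`χ v`, in which case she plays the progress move towards `χ v`. Once the play only shows `d`,
every default move with `χ v ≠ d` would show another colour, so Eve always plays towards `d`. -/
theorem exists_mem_card_two_setsWinning [Finite Γ] [Nonempty Γ] (hε : G.EpsFree)
    (hG : G.WinsEve (atLeastTwo Γ)) :
    ∃ m : Mem G, Fintype.card m.M = 2 ∧ m.SetsWinning (atLeastTwo Γ) := by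
  let c₀ : Γ := Classical.arbitrary Γ
  let χ : G.V → Γ := fun v => (G.col v (G.progressMove c₀ v)).getD c₀
  have hχ : ∀ v, G.col v (G.progressMove c₀ v) = some (χ v) := fun v => by
    obtain ⟨a, ha⟩ := Option.ne_none_iff_exists'.1 (hε _ _ (G.edge_progressMove c₀ v))
    simp [χ, ha]
  refine ⟨G.matchMem χ, rfl, fun v (b : Bool) => G.progressMove (if b then χ v else c₀) v,
    fun v b _ => G.edge_progressMove _ v, ?_⟩
  intro ρ hplay hfollow
  refine infCol_mem_of_progressMove hplay (G.v0_mem_winRegion hG)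
    (fun t hE => ⟨_, hfollow t hE⟩) fun d hd => ?_
  obtain ⟨T, hT⟩ : ∃ T, ∀ t ≥ T, G.col (ρ t) (ρ (t + 1)) = some d := by
    refine eventually_atTop.1 ?_
    filter_upwards [hd] with t ht
    obtain ⟨a, ha⟩ := Option.ne_none_iff_exists'.1 (hε _ _ (hplay.2 t))
    rw [ha, ht a ha]
  filter_upwards [eventually_gt_atTop T] with t ht hE
  obtain ⟨s, rfl⟩ : ∃ s, t = s + 1 := ⟨t - 1, by omega⟩
  have hst : (G.matchMem χ).st ρ (s + 1) = decide (some d = some (χ (ρ (s + 1)))) := by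
    rw [← hT s (by omega)]; rfl
  rw [hfollow _ hE, hst]
  by_cases hχd : χ (ρ (s + 1)) = d
  · simp [hχd]
  · have hc₀ := hT (s + 1) ht.le
    rw [hfollow _ hE, hst] at hc₀
    simp only [Option.some.injEq, Ne.symm hχd, decide_false, Bool.false_eq_true, if_false,
      hχ] at hc₀
    exact absurd hc₀ hχd

end

end Game

/-- Eve, at vertex `0`, chooses between the cycle through `1`, coloured `a`, and the cycle
through `2`, coloured `b`. -/
abbrev twoCyclesGame {Γ : Type} (a b : Γ) : Game Γ where
  V := Fin 3
  EveV := {0}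
  edge v u := (v = 0 ∧ u ≠ 0) ∨ (v ≠ 0 ∧ u = 0)
  v0 := 0
  col v u := some (if v = 2 ∨ u = 2 then b else a)
  exists_succ := by decide
  no_eps_cycle := fun ⟨v, l, h⟩ =>
    List.not_isChain_cycle_of_lt (fun _ => 0) (fun _ _ h => absurd h.2 (Option.some_ne_none _))
      v l h

namespace twoCyclesGame

variable {Γ : Type} (a b : Γ)

theorem epsFree : (twoCyclesGame a b).EpsFree :=
  fun _ _ _ => Option.some_ne_none _

variable [Finite Γ]

/-- Eve alternates between the two cycles. -/
theorem winsEve (hab : a ≠ b) : (twoCyclesGame a b).WinsEve (atLeastTwo Γ) := by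
  let path : ℕ → Fin 3 := fun k => if k % 2 = 0 then 0 else if k % 4 = 1 then 1 else 2
  refine ⟨fun h _ => if h.length % 4 = 0 then 1 else 2, fun h v hv => ?_, fun ρ hplay hfollow => ?_⟩
  · rw [show v = 0 from hv]
    dsimp only
    split_ifs <;> simp
  have hpath : ∀ k, ρ k = path k := fun k => by
    induction k with
    | zero => exact hplay.1
    | succ k ih =>
      by_cases hk : k % 2 = 0
      · have hE : ρ k = 0 := by rw [ih]; simp [path, hk]
        rw [hfollow k hE]
        dsimp only
        rw [Game.hist_length]
        simp only [path]
        split_ifs <;> first | rfl | omega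
      · have hA : path k ≠ 0 := by simp only [path, hk, if_false]; split_ifs <;> decide
        have hedge : (ρ k = 0 ∧ ρ (k + 1) ≠ 0) ∨ (ρ k ≠ 0 ∧ ρ (k + 1) = 0) := hplay.2 k
        rw [(hedge.resolve_left fun h => hA (ih ▸ h.1)).2]
        simp only [path]
        split_ifs <;> first | rfl | omega
  have hpath' : ∀ N, ρ (4 * N) = 0 ∧ ρ (4 * N + 1) = 1 ∧ ρ (4 * N + 2) = 0 ∧
      ρ (4 * N + 2 + 1) = 2 := fun N => by
    simp only [hpath, path]
    refine ⟨if_pos (by omega), ?_, if_pos (by omega), ?_⟩ <;>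
      rw [if_neg (by omega)] <;> split_ifs <;> first | rfl | omega
  refine (Set.one_lt_ncard (Set.toFinite _)).2 ⟨a, fun N => ⟨4 * N, by omega, ?_⟩,
    b, fun N => ⟨4 * N + 2, by omega, ?_⟩, hab⟩
  · obtain ⟨h0, h1, -, -⟩ := hpath' N
    simp only [h0, h1]
    rfl
  · obtain ⟨-, -, h2, h3⟩ := hpath' N
    simp only [h2, h3]
    rfl

/-- Without memory, Eve always chooses the same cycle. -/
theorem not_setsWinning (m : Mem (twoCyclesGame a b)) (hm : Fintype.card m.M < 2) :
    ¬ m.SetsWinning (atLeastTwo Γ) := by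
  rintro ⟨nm, hnm, hwin⟩
  have : Subsingleton m.M := Fintype.card_le_one_iff_subsingleton.1 (by omega)
  let u : Fin 3 := nm 0 m.m0
  have hu : u ≠ 0 := by simpa using hnm 0 m.m0 rfl
  let ρ : ℕ → Fin 3 := fun t => if t % 2 = 0 then 0 else u
  have hρ : ∀ t, ρ t = 0 ↔ t % 2 = 0 := fun t => by
    simp only [ρ]; split_ifs <;> simp [*]
  have hedge : ∀ t, (twoCyclesGame a b).edge (ρ t) (ρ (t + 1)) := fun t => by
    simp only [ne_eq, hρ]
    omega
  have hfollow : ∀ t, ρ t ∈ (twoCyclesGame a b).EveV → ρ (t + 1) = nm (ρ t) (m.st ρ t) :=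
    fun t hE => by
      have ht : t % 2 = 0 := (hρ t).1 hE
      rw [show ρ (t + 1) = u from if_neg (by omega), show ρ t = 0 from hE,
        Subsingleton.elim (m.st ρ t) m.m0]
  have hcol : ∀ t, (twoCyclesGame a b).col (ρ t) (ρ (t + 1)) =
      some (if u = 2 then b else a) := fun t => by
    rcases Nat.mod_two_eq_zero_or_one t with ht | ht <;>
      simp [ρ, ht, Nat.succ_mod_two_eq_zero_iff]
  exact ((twoCyclesGame a b).one_lt_ncard_infCol_iff hedge).1 (hwin ρ ⟨rfl, hedge⟩ hfollow) _
    (Eventually.of_forall fun t x hx => Option.some.inj ((hcol t).symm.trans hx).symm)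

end twoCyclesGame

/-- The moves of `forbiddingGame`: from `inl c` (which shows `c`) to the hub `inr none`, from the
hub to some `inr (some j)` (Eve forbids `j`), and from there to any `inl c` with `c ≠ j`. -/
def forbiddingEdge {Γ : Type} : Γ ⊕ Option Γ → Γ ⊕ Option Γ → Prop
  | .inl _, .inr none => True
  | .inr none, .inr (some _) => True
  | .inr (some j), .inl c => c ≠ j
  | _, _ => False

/-- Heights decreasing along the uncoloured moves of `forbiddingGame`. -/
def forbiddingHeight {Γ : Type} : Γ ⊕ Option Γ → ℕ
  | .inl _ => 0
  | .inr (some _) => 1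
  | .inr none => 2

/-- Eve wins by forbidding the colour shown last, which her single vertex does not reveal. -/
abbrev forbiddingGame (Γ : Type) [Fintype Γ] [Nontrivial Γ] : Game Γ where
  V := Γ ⊕ Option Γ
  EveV := {.inr none}
  edge := forbiddingEdge
  v0 := .inr none
  col v _ := v.getLeft?
  exists_succ
    | .inl _ => ⟨.inr none, trivial⟩
    | .inr none => ⟨.inr (some (Classical.arbitrary Γ)), trivial⟩
    | .inr (some j) => let ⟨c, hc⟩ := exists_ne j; ⟨.inl c, hc⟩
  no_eps_cycle := fun ⟨v, l, h⟩ => List.not_isChain_cycle_of_lt forbiddingHeight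
    (fun
      | .inl _, _, ⟨_, h⟩ => absurd h (Option.some_ne_none _)
      | .inr none, .inr (some _), _ => Nat.one_lt_two
      | .inr (some _), .inl _, _ => Nat.zero_lt_one
      | .inr none, .inl _, ⟨h, _⟩ | .inr none, .inr none, ⟨h, _⟩ => h.elim
      | .inr (some _), .inr _, ⟨h, _⟩ => h.elim)
    v l h

namespace forbiddingGame

variable {Γ : Type} [Fintype Γ] [Nontrivial Γ]

theorem edge_inl {c : Γ} {u : (forbiddingGame Γ).V} (h : (forbiddingGame Γ).edge (.inl c) u) :
    u = .inr none := by
  rcases u with _ | _ | _ <;> first | rfl | exact h.elim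

theorem edge_hub {u : (forbiddingGame Γ).V} (h : (forbiddingGame Γ).edge (.inr none) u) :
    ∃ j, u = .inr (some j) := by
  rcases u with _ | _ | j
  exacts [h.elim, h.elim, ⟨j, rfl⟩]

theorem edge_forbid {j : Γ} {u : (forbiddingGame Γ).V}
    (h : (forbiddingGame Γ).edge (.inr (some j)) u) : ∃ c, c ≠ j ∧ u = .inl c := by
  rcases u with c | _ | _
  exacts [⟨c, h, rfl⟩, h.elim, h.elim]

theorem winsEve : (forbiddingGame Γ).WinsEve (atLeastTwo Γ) := by
  let lastShown : List (forbiddingGame Γ).V → Γ := fun h =>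
    (h.getLast?.bind Sum.getLeft?).getD (Classical.arbitrary Γ)
  refine ⟨fun h _ => .inr (some (lastShown h)), fun _ _ hv => hv ▸ trivial,
    fun ρ hplay hfollow => ?_⟩
  refine ((forbiddingGame Γ).one_lt_ncard_infCol_iff hplay.2).2 fun d hd => ?_
  obtain ⟨T, hT⟩ := eventually_atTop.1 hd
  obtain ⟨t, htT, ht⟩ := frequently_atTop.1
    ((forbiddingGame Γ).frequently_col_ne_none hplay.2) T
  obtain ⟨a, ha⟩ := Option.ne_none_iff_exists'.1 ht
  have hρt : ρ t = .inl a := by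
    rcases hρ : ρ t with c | _ <;> simp_all
  have h1 : ρ (t + 1) = .inr none := edge_inl (hρt ▸ hplay.2 t)
  have h2 : ρ (t + 2) = .inr (some a) := by
    rw [hfollow (t + 1) h1]
    dsimp only [lastShown]
    rw [Game.hist_getLast?, hρt]
    rfl
  obtain ⟨c, hca, h3⟩ := edge_forbid (h2 ▸ hplay.2 (t + 2))
  have hshown : ∀ s ≥ T, ∀ c, ρ s = .inl c → c = d := fun s hs c hc =>
    hT s hs c (by simp [hc])
  exact hca ((hshown _ (by omega) c h3).trans (hshown t htT a hρt).symm)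

/-- With fewer memory states than colours, some colour `c` is never forbidden, and Adam shows
it forever. -/
theorem not_setsWinning (m : Mem (forbiddingGame Γ)) (hm : Fintype.card m.M < Fintype.card Γ) :
    ¬ m.SetsWinning (atLeastTwo Γ) := by
  rintro ⟨nm, hnm, hwin⟩
  choose N hN using fun x => edge_hub (hnm (.inr none) x rfl)
  obtain ⟨c, hc⟩ : ∃ c, ∀ x, N x ≠ c := by
    by_contra! h
    exact absurd (Fintype.card_le_of_surjective N fun c => (h c).imp fun _ => id) (by omega)
  let next : (forbiddingGame Γ).V → m.M → (forbiddingGame Γ).V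
    | .inl _, _ => .inr none
    | .inr none, x => nm (.inr none) x
    | .inr (some _), _ => .inl c
  let ρ : ℕ → (forbiddingGame Γ).V := fun t => (runFrom (.inr none) m.m0 m.upd next t).1
  have hnext : ∀ t, ρ (t + 1) = next (ρ t) (m.st ρ t) := fun t => by
    rw [m.st_runFrom]; rfl
  have hreach : ∀ t, ρ t = .inr none ∨ (∃ x, ρ t = .inr (some (N x))) ∨ ρ t = .inl c := by
    intro t
    induction t with
    | zero => exact .inl rfl
    | succ t ih =>
      rw [hnext]
      rcases ih with h | ⟨x, h⟩ | h <;> rw [h]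
      exacts [.inr (.inl ⟨_, hN _⟩), .inr (.inr rfl), .inl rfl]
  have hedge : ∀ t, (forbiddingGame Γ).edge (ρ t) (ρ (t + 1)) := fun t => by
    rw [hnext]
    rcases hreach t with h | ⟨x, h⟩ | h <;> rw [h]
    exacts [hnm _ _ rfl, (hc x).symm, trivial]
  have hfollow : ∀ t, ρ t ∈ (forbiddingGame Γ).EveV → ρ (t + 1) = nm (ρ t) (m.st ρ t) :=
    fun t hE => by rw [hnext, show ρ t = .inr none from hE]
  refine ((forbiddingGame Γ).one_lt_ncard_infCol_iff hedge).1 (hwin ρ ⟨rfl, hedge⟩ hfollow) c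
    (Eventually.of_forall fun t a ha => ?_)
  rcases hreach t with h | ⟨x, h⟩ | h <;> simp_all

end forbiddingGame

theorem memGenEf_atLeastTwo (Γ : Type) [Finite Γ] [Nontrivial Γ] :
    memGenEf (atLeastTwo Γ) = 2 := by
  refine IsLeast.csInf_eq ⟨fun G hε hG => G.exists_mem_card_two_setsWinning hε hG, fun k hk => ?_⟩
  obtain ⟨a, b, hab⟩ := exists_pair_ne Γ
  obtain ⟨m, rfl, hm⟩ := hk _ (twoCyclesGame.epsFree a b) (twoCyclesGame.winsEve a b hab)
  by_contra! hlt
  exact twoCyclesGame.not_setsWinning a b m hlt hm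

theorem memGen_atLeastTwo (Γ : Type) [Fintype Γ] [Nontrivial Γ] :
    memGen (atLeastTwo Γ) = Fintype.card Γ := by
  refine IsLeast.csInf_eq ⟨fun G hG => G.exists_mem_card_eq_setsWinning hG, fun k hk => ?_⟩
  obtain ⟨m, rfl, hm⟩ := hk _ forbiddingGame.winsEve
  by_contra! hlt
  exact forbiddingGame.not_setsWinning m hlt hm

/-- For the Muller condition `F_n = {A ⊆ {1,…,n} : |A| > 1}`, the general
memory requirements are `2` over `ε`-free games but `n` over games with
`ε`-transitions. -/
theorem stmt16 (n : ℕ) (hn : 2 ≤ n) :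
    memGenEf {A : Set (Fin n) | 1 < A.ncard} = 2 ∧
    memGen {A : Set (Fin n) | 1 < A.ncard} = n := by
  have : Nontrivial (Fin n) := Fin.nontrivial_iff_two_le.2 hn
  exact ⟨memGenEf_atLeastTwo (Fin n), (memGen_atLeastTwo (Fin n)).trans (Fintype.card_fin n)⟩
end
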